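/- arXiv:1701.09185 — 7 statements merged into one kernel-verified Lean document; each statement's English description precedes it below -/
import Mathlib

section
/- Let σ ∈ X be a WR configuration on the K×L square lattice with periodic boundary conditions. If σ has a vertical m-bridge in some column and a horizontal m'-quasi-bridge in some row, then m = m'; likewise, if σ has a horizontal m-bridge in some row and a vertical m'-quasi-bridge in some column, then m = m'. (A bridge and a quasi-bridge of different colors cannot be perpendicular to each other.) -/
/-! The bridge and the quasi-bridge cross in a single site. That site carries the bridge's color
`m ≥ 1`, so it is not the empty site of the quasi-bridge and must carry its color `m'`. -/

/-- Sites of the `K × L` square lattice with periodic boundary conditions: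
`(j, i)` lies in column `c_j` and row `r_i`. -/
abbrev SiteP (K L : ℕ) := ZMod L × ZMod K

/-- Adjacency on the periodic lattice: the two sites differ by `±1` in exactly
one coordinate (modulo `L` in the first, modulo `K` in the second). -/
def adjP (K L : ℕ) (v w : SiteP K L) : Prop :=
  (v.2 = w.2 ∧ (w.1 = v.1 + 1 ∨ v.1 = w.1 + 1)) ∨
  (v.1 = w.1 ∧ (w.2 = v.2 + 1 ∨ v.2 = w.2 + 1))

/-- Widom–Rowlinson configurations with `M` particle types on the periodic lattice. -/
def IsWRP (K L M : ℕ) (σ : SiteP K L → ℕ) : Prop :=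
  (∀ v, σ v ≤ M) ∧ ∀ v w, adjP K L v w → σ v = 0 ∨ σ w = 0 ∨ σ v = σ w

/-- `σ` has a vertical `m`-bridge in column `c_j`. -/
def VBridgeP (K L : ℕ) (σ : SiteP K L → ℕ) (m : ℕ) (j : ZMod L) : Prop :=
  ∀ i : ZMod K, σ (j, i) = m

/-- `σ` has a horizontal `m`-bridge in row `r_i`. -/
def HBridgeP (K L : ℕ) (σ : SiteP K L → ℕ) (m : ℕ) (i : ZMod K) : Prop :=
  ∀ j : ZMod L, σ (j, i) = m

/-- `σ` has a vertical `m`-quasi-bridge in column `c_j`: one empty site, all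
other sites of the column occupied by type `m`. -/
def VQuasiP (K L : ℕ) (σ : SiteP K L → ℕ) (m : ℕ) (j : ZMod L) : Prop :=
  ∃ i₀ : ZMod K, σ (j, i₀) = 0 ∧ ∀ i : ZMod K, i ≠ i₀ → σ (j, i) = m

/-- `σ` has a horizontal `m`-quasi-bridge in row `r_i`. -/
def HQuasiP (K L : ℕ) (σ : SiteP K L → ℕ) (m : ℕ) (i : ZMod K) : Prop :=
  ∃ j₀ : ZMod L, σ (j₀, i) = 0 ∧ ∀ j : ZMod L, j ≠ j₀ → σ (j, i) = m

theorem HQuasiP.apply_eq_of_ne_zero {K L : ℕ} {σ : SiteP K L → ℕ} {m : ℕ} {i : ZMod K}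
    {j : ZMod L} (hq : HQuasiP K L σ m i) (hj : σ (j, i) ≠ 0) : σ (j, i) = m := by
  obtain ⟨j₀, hempty, hrest⟩ := hq
  exact hrest j fun h => hj (h ▸ hempty)

theorem VQuasiP.apply_eq_of_ne_zero {K L : ℕ} {σ : SiteP K L → ℕ} {m : ℕ} {j : ZMod L}
    {i : ZMod K} (hq : VQuasiP K L σ m j) (hi : σ (j, i) ≠ 0) : σ (j, i) = m := by
  obtain ⟨i₀, hempty, hrest⟩ := hq
  exact hrest i fun h => hi (h ▸ hempty)

theorem bridge_quasibridge_not_perpendicular_general (K L : ℕ)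
    (σ : SiteP K L → ℕ)
    (m m' : ℕ) (hm1 : 1 ≤ m) :
    (∀ (j : ZMod L) (i : ZMod K), VBridgeP K L σ m j → HQuasiP K L σ m' i → m = m') ∧
    (∀ (i : ZMod K) (j : ZMod L), HBridgeP K L σ m i → VQuasiP K L σ m' j → m = m') := by
  constructor
  · intro j i hb hq
    rw [← hb i, hq.apply_eq_of_ne_zero (by rw [hb i]; omega)]
  · intro i j hb hq
    rw [← hb j, hq.apply_eq_of_ne_zero (by rw [hb j]; omega)]

/-- A bridge and a quasi-bridge of different colors cannot be perpendicular to
each other. -/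
theorem bridge_quasibridge_not_perpendicular (K L M : ℕ)
    (hK : 2 ≤ K) (hL : 2 ≤ L) (hM : 2 ≤ M)
    (σ : SiteP K L → ℕ) (hσ : IsWRP K L M σ)
    (m m' : ℕ) (hm1 : 1 ≤ m) (hmM : m ≤ M) (hm'1 : 1 ≤ m') (hm'M : m' ≤ M) :
    (∀ (j : ZMod L) (i : ZMod K), VBridgeP K L σ m j → HQuasiP K L σ m' i → m = m') ∧
    (∀ (i : ZMod K) (j : ZMod L), HBridgeP K L σ m i → VQuasiP K L σ m' j → m = m') :=
  bridge_quasibridge_not_perpendicular_general K L σ m m' hm1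
end

section
/- Let σ ∈ X be a WR configuration on the K×L square lattice with periodic boundary conditions. Suppose σ has a vertical m-quasi-bridge in column c_j whose unique empty site is v, and a horizontal m'-quasi-bridge in row r_i whose unique empty site is w, with m ≠ m'. Then v = w = (j,i), the intersection site of column c_j and row r_i. (Two perpendicular quasi-bridges of different colors must meet in their empty site.) -/
/-!
Unless it is empty, the crossing site `(j, i)` of the column and the row would carry colour `m`
as a site of the column and colour `m'` as a site of the row. Being empty, it is then the unique
empty site of both quasi-bridges.
-/

section QuasiLine

variable {ι γ : Type*} [Zero γ] {f : ι → γ} {a x : ι} {m : γ}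

theorem eq_of_apply_eq_zero_of_forall_ne_eq (hm : m ≠ 0) (hf : ∀ y, y ≠ a → f y = m)
    (hx : f x = 0) : x = a := by
  by_contra h
  exact hm ((hf x h).symm.trans hx)

theorem apply_eq_zero_or_eq_of_forall_ne_eq (ha : f a = 0) (hf : ∀ y, y ≠ a → f y = m) (x : ι) :
    f x = 0 ∨ f x = m := by
  by_cases h : x = a
  · exact .inl (h ▸ ha)
  · exact .inr (hf x h)

end QuasiLine

theorem crossing_eq_zero_of_quasi_lines {α β γ : Type*} [Zero γ] {σ : α × β → γ}
    {m m' : γ} (hne : m ≠ m') {j b : α} {i a : β}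
    (hcol0 : σ (j, a) = 0) (hcol : ∀ i', i' ≠ a → σ (j, i') = m)
    (hrow0 : σ (b, i) = 0) (hrow : ∀ j', j' ≠ b → σ (j', i) = m') :
    σ (j, i) = 0 := by
  rcases apply_eq_zero_or_eq_of_forall_ne_eq (f := fun i' => σ (j, i')) hcol0 hcol i with h | hcolm
  · exact h
  rcases apply_eq_zero_or_eq_of_forall_ne_eq (f := fun j' => σ (j', i)) hrow0 hrow j with h | hrowm
  · exact h
  exact absurd (hcolm.symm.trans hrowm) hne

theorem quasibridges_meet_in_empty_site_general (K L : ℕ)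
    (σ : SiteP K L → ℕ)
    (m m' : ℕ) (hm1 : 1 ≤ m) (hm'1 : 1 ≤ m')
    (hne : m ≠ m') (j : ZMod L) (i : ZMod K) (a : ZMod K) (b : ZMod L)
    (hcol0 : σ (j, a) = 0) (hcol : ∀ i' : ZMod K, i' ≠ a → σ (j, i') = m)
    (hrow0 : σ (b, i) = 0) (hrow : ∀ j' : ZMod L, j' ≠ b → σ (j', i) = m') :
    a = i ∧ b = j := by
  have hm : m ≠ 0 := Nat.one_le_iff_ne_zero.mp hm1
  have hm' : m' ≠ 0 := Nat.one_le_iff_ne_zero.mp hm'1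
  have hcross : σ (j, i) = 0 := crossing_eq_zero_of_quasi_lines hne hcol0 hcol hrow0 hrow
  exact ⟨(eq_of_apply_eq_zero_of_forall_ne_eq (f := fun i' => σ (j, i')) hm hcol hcross).symm,
    (eq_of_apply_eq_zero_of_forall_ne_eq (f := fun j' => σ (j', i)) hm' hrow hcross).symm⟩

/-- Two perpendicular quasi-bridges of different colors must meet in their
(unique) empty site: if `σ` has a vertical `m`-quasi-bridge in column `c_j` with
empty site `(j, a)` and a horizontal `m'`-quasi-bridge in row `r_i` with empty
site `(b, i)`, and `m ≠ m'`, then both empty sites equal the intersection site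
`(j, i)`. -/
theorem quasibridges_meet_in_empty_site (K L M : ℕ)
    (hK : 2 ≤ K) (hL : 2 ≤ L) (hM : 2 ≤ M)
    (σ : SiteP K L → ℕ) (hσ : IsWRP K L M σ)
    (m m' : ℕ) (hm1 : 1 ≤ m) (hmM : m ≤ M) (hm'1 : 1 ≤ m') (hm'M : m' ≤ M)
    (hne : m ≠ m') (j : ZMod L) (i : ZMod K) (a : ZMod K) (b : ZMod L)
    (hcol0 : σ (j, a) = 0) (hcol : ∀ i' : ZMod K, i' ≠ a → σ (j, i') = m)
    (hrow0 : σ (b, i) = 0) (hrow : ∀ j' : ZMod L, j' ≠ b → σ (j', i) = m') :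
    a = i ∧ b = j :=
  quasibridges_meet_in_empty_site_general K L σ m m' hm1 hm'1 hne j i a b hcol0 hcol hrow0 hrow
end

section
/- Consider the Widom–Rowlinson model with M ≥ 2 particle types on the K×L square lattice Λ with periodic boundary conditions, with K + L ≥ 6, and set Γ(Λ) = 2K if K = L and Γ(Λ) = min{2K,2L} + 1 if K ≠ L. Then every non-stable WR configuration σ ∈ X \ X^s satisfies Φ(σ, X^s) − H(σ) < Γ(Λ). -/
/-- The energy `H(σ) = -#{v : σ v ≠ 0}`. -/
noncomputable def HP (K L : ℕ) (σ : SiteP K L → ℕ) : ℤ :=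
  -(Nat.card {v : SiteP K L // σ v ≠ 0} : ℤ)

/-- `σ` and `σ'` are related by a single-site update: they differ at exactly
one site `v`, and moreover `σ v = 0` or `σ' v = 0`. -/
def UpdP (K L : ℕ) (σ σ' : SiteP K L → ℕ) : Prop :=
  ∃ v, (σ v = 0 ∨ σ' v = 0) ∧ σ v ≠ σ' v ∧ ∀ w, w ≠ v → σ w = σ' w

/-- A path `ω : σ → σ'`: a finite nonempty sequence of WR configurations from
`σ` to `σ'` whose consecutive configurations coincide or are related by a
single-site update. -/
def IsPathP (K L M : ℕ) (ω : List (SiteP K L → ℕ)) (σ σ' : SiteP K L → ℕ) : Prop :=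
  ω ≠ [] ∧ ω.head? = some σ ∧ ω.getLast? = some σ' ∧
    (∀ η ∈ ω, IsWRP K L M η) ∧
    ω.Chain' (fun η η' => η = η' ∨ UpdP K L η η')

/-- The height `Φ_ω` of a path: the maximum energy along it. -/
noncomputable def heightP (K L : ℕ) (ω : List (SiteP K L → ℕ)) : ℤ :=
  sSup {h : ℤ | ∃ η ∈ ω, HP K L η = h}

/-- The communication height `Φ(σ,σ')`: the minimal height over all paths
`ω : σ → σ'`. -/
noncomputable def commP (K L M : ℕ) (σ σ' : SiteP K L → ℕ) : ℤ :=
  sInf {h : ℤ | ∃ ω, IsPathP K L M ω σ σ' ∧ heightP K L ω = h}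

/-- The set `X^s = {s^(1),…,s^(M)}` of stable configurations. -/
def stableP (K L M : ℕ) : Set (SiteP K L → ℕ) :=
  {σ | ∃ m : ℕ, 1 ≤ m ∧ m ≤ M ∧ σ = fun _ => m}

/-- The energy barrier `Γ(Λ)` for the periodic `K × L` lattice. -/
noncomputable def GammaP (K L : ℕ) : ℤ :=
  if K = L then (2 * K : ℤ) else ((min (2 * K) (2 * L) : ℕ) : ℤ) + 1

/-- `Φ(σ, A) = min_{σ' ∈ A} Φ(σ, σ')`. -/
noncomputable def commSetP (K L M : ℕ) (σ : SiteP K L → ℕ)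
    (A : Set (SiteP K L → ℕ)) : ℤ :=
  sInf {h : ℤ | ∃ σ' ∈ A, commP K L M σ σ' = h}

open Finset

/-!
Sweep `σ` column by column into a constant configuration `s^(m)`. Choose `m` so that column
`c_0` carries at most `K - 2` particles of a type other than `m`: if `c_0` carries two different
types, then on the cycle `c_0` each of the two arcs between them contains a vacant site. Remove
these foreign particles, then those of `c_1`. Then for `j = 1, …, L - 1` and finally `j = 0`,
site by site, remove the foreign particle of `(c_{j+1}, r_i)`, if any, and fill `(c_j, r_i)` with
type `m`. At any time the removed but not yet replaced particles are those of `c_0` and at most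
`K + 1` others, so the path stays within `2K - 1` of `H(σ)`. Transposing the lattice if
necessary gives the bound `2 min(K, L) - 1 < Γ(Λ)`.
-/

namespace ZMod

lemma val_add_one_le {n : ℕ} (c : ZMod n) : (c + 1).val ≤ c.val + 1 :=
  (val_add_le c 1).trans (Nat.add_le_add_left ((val_one_eq_one_mod n).trans_le (Nat.mod_le 1 n)) _)

lemma val_le_val_sub_one_add_one {n : ℕ} (c : ZMod n) : c.val ≤ (c - 1).val + 1 := by
  have := val_add_one_le (c - 1)
  rwa [sub_add_cancel] at this

lemma val_sub_one_add_one {n : ℕ} [NeZero n] {c : ZMod n} (hc : c ≠ 0) :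
    (c - 1).val + 1 = c.val := by
  have hn : n ≠ 1 := by
    rintro rfl
    exact hc (Subsingleton.elim _ _)
  have hone : (1 : ZMod n).val = 1 := val_one'' hn
  have hpos : 0 < c.val := val_pos.2 hc
  rw [val_sub (by omega), hone]
  omega

end ZMod

namespace WidomRowlinson

section Cycle

variable {K : ℕ} {f : ZMod K → ℕ}

lemma apply_add_eq_of_forall_ne_zero (hf : ∀ i, f i = 0 ∨ f (i + 1) = 0 ∨ f i = f (i + 1))
    {a : ZMod K} {n : ℕ} (h : ∀ u ≤ n, f (a + u) ≠ 0) : f (a + n) = f a := by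
  induction n with
  | zero => simp
  | succ n ih =>
    have hstep : a + ((n + 1 : ℕ) : ZMod K) = a + n + 1 := by push_cast; ring
    rw [hstep, ← ih fun u hu => h u (by omega)]
    rcases hf (a + n) with h0 | h0 | h0
    · exact absurd h0 (h n (by omega))
    · exact absurd h0 (hstep ▸ h (n + 1) le_rfl)
    · exact h0.symm

variable [NeZero K]

lemma exists_zero_between (hf : ∀ i, f i = 0 ∨ f (i + 1) = 0 ∨ f i = f (i + 1))
    {a b : ZMod K} (ha : f a ≠ 0) (hb : f b ≠ 0) (hab : f a ≠ f b) :
    ∃ u : ℕ, 0 < u ∧ u < (b - a).val ∧ f (a + u) = 0 := by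
  have hend : a + ((b - a).val : ZMod K) = b := by
    rw [ZMod.natCast_zmod_val, add_sub_cancel]
  by_contra! hnone
  refine hab (hend ▸ apply_add_eq_of_forall_ne_zero hf fun u hu => ?_).symm
  rcases Nat.eq_zero_or_pos u with rfl | hu0
  · simpa using ha
  rcases hu.lt_or_eq with hlt | rfl
  · exact hnone u hu0 hlt
  · rwa [hend]

/-- On a cycle, two distinct particle types are separated by a vacant site on either arc. -/
lemma exists_two_zeros (hf : ∀ i, f i = 0 ∨ f (i + 1) = 0 ∨ f i = f (i + 1))
    {a b : ZMod K} (ha : f a ≠ 0) (hb : f b ≠ 0) (hab : f a ≠ f b) :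
    ∃ z₁ z₂, z₁ ≠ z₂ ∧ f z₁ = 0 ∧ f z₂ = 0 := by
  obtain ⟨u, -, hu, hfu⟩ := exists_zero_between hf ha hb hab
  obtain ⟨u', -, hu', hfu'⟩ := exists_zero_between hf hb ha (Ne.symm hab)
  refine ⟨a + u, b + u', fun heq => ?_, hfu, hfu'⟩
  have hba : b - a ≠ 0 := sub_ne_zero.2 fun h => hab (h ▸ rfl)
  have harcs : (b - a).val + (a - b).val = K := by
    rw [← neg_sub b a, ZMod.neg_val, if_neg hba]
    have := ZMod.val_lt (b - a)
    omega
  have hcast : ((u : ℕ) : ZMod K) = (((b - a).val + u' : ℕ) : ZMod K) := by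
    push_cast
    rw [ZMod.natCast_zmod_val]
    linear_combination heq
  have := congrArg ZMod.val hcast
  rw [ZMod.val_cast_of_lt (by omega), ZMod.val_cast_of_lt (by omega)] at this
  omega

lemma exists_type_card_foreign_le (hf : ∀ i, f i = 0 ∨ f (i + 1) = 0 ∨ f i = f (i + 1))
    {M : ℕ} (hfM : ∀ i, f i ≤ M) (hM : 1 ≤ M) :
    ∃ m, 1 ≤ m ∧ m ≤ M ∧ #{i | f i ≠ 0 ∧ f i ≠ m} ≤ K - 2 := by
  by_cases htwo : ∃ a b, f a ≠ 0 ∧ f b ≠ 0 ∧ f a ≠ f b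
  · obtain ⟨a, b, ha, hb, hab⟩ := htwo
    obtain ⟨z₁, z₂, hz, hz₁, hz₂⟩ := exists_two_zeros hf ha hb hab
    refine ⟨1, le_rfl, hM, ?_⟩
    calc #{i | f i ≠ 0 ∧ f i ≠ 1} ≤ #(univ \ {z₁, z₂}) := by
          refine card_le_card fun i hi => ?_
          simp only [mem_filter, mem_univ, true_and] at hi
          simp only [mem_sdiff, mem_univ, mem_insert, mem_singleton, true_and]
          rintro (rfl | rfl) <;> simp_all
      _ = K - 2 := by
          rw [card_sdiff_of_subset (subset_univ _), card_univ, ZMod.card, card_pair hz]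
  · push Not at htwo
    by_cases hocc : ∃ i₀, f i₀ ≠ 0
    · obtain ⟨i₀, hi₀⟩ := hocc
      refine ⟨f i₀, Nat.one_le_iff_ne_zero.2 hi₀, hfM i₀, ?_⟩
      rw [filter_false_of_mem fun i _ h => h.2 (htwo i i₀ h.1 hi₀), card_empty]
      exact Nat.zero_le _
    · push Not at hocc
      exact ⟨1, le_rfl, hM, by simp [hocc]⟩

end Cycle

section Heights

def ReachesAtHeight (K L M : ℕ) (σ : SiteP K L → ℕ) (A : Set (SiteP K L → ℕ)) (c : ℤ) : Prop :=
  ∃ τ ∈ A, ∃ ω, IsPathP K L M ω σ τ ∧ ∀ η ∈ ω, HP K L η ≤ c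

variable {K L M : ℕ}

lemma HP_nonpos (σ : SiteP K L → ℕ) : HP K L σ ≤ 0 := by
  simp [HP]

lemma head_mem_of_isPathP {ω : List (SiteP K L → ℕ)} {σ τ : SiteP K L → ℕ}
    (hω : IsPathP K L M ω σ τ) : σ ∈ ω :=
  List.mem_of_mem_head? hω.2.1

lemma HP_le_heightP {ω : List (SiteP K L → ℕ)} {η : SiteP K L → ℕ} (hη : η ∈ ω) :
    HP K L η ≤ heightP K L ω :=
  le_csSup ⟨0, by rintro _ ⟨η, -, rfl⟩; exact HP_nonpos η⟩ ⟨η, hη, rfl⟩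

lemma heightP_le {ω : List (SiteP K L → ℕ)} {η : SiteP K L → ℕ} (hη : η ∈ ω) {c : ℤ}
    (hc : ∀ η ∈ ω, HP K L η ≤ c) : heightP K L ω ≤ c :=
  csSup_le ⟨_, η, hη, rfl⟩ (by rintro _ ⟨η, hη, rfl⟩; exact hc η hη)

lemma HP_le_commP (σ τ : SiteP K L → ℕ) : HP K L σ ≤ commP K L M σ τ := by
  rcases Set.eq_empty_or_nonempty {h | ∃ ω, IsPathP K L M ω σ τ ∧ heightP K L ω = h} with h | h
  · -- the junk value `sInf ∅ = 0` is harmless since energies are nonpositive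
    rw [commP, h, Int.csInf_empty]
    exact HP_nonpos σ
  · exact le_csInf h (by rintro _ ⟨ω, hω, rfl⟩; exact HP_le_heightP (head_mem_of_isPathP hω))

lemma commP_le_heightP {ω : List (SiteP K L → ℕ)} {σ τ : SiteP K L → ℕ}
    (hω : IsPathP K L M ω σ τ) : commP K L M σ τ ≤ heightP K L ω :=
  csInf_le ⟨HP K L σ, by rintro _ ⟨ω', hω', rfl⟩; exact HP_le_heightP (head_mem_of_isPathP hω')⟩
    ⟨ω, hω, rfl⟩

lemma commSetP_le_commP {σ τ : SiteP K L → ℕ} {A : Set (SiteP K L → ℕ)} (hτ : τ ∈ A) :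
    commSetP K L M σ A ≤ commP K L M σ τ :=
  csInf_le ⟨HP K L σ, by rintro _ ⟨τ', -, rfl⟩; exact HP_le_commP σ τ'⟩ ⟨τ, hτ, rfl⟩

lemma commSetP_le_of_reachesAtHeight {σ : SiteP K L → ℕ} {A : Set (SiteP K L → ℕ)} {c : ℤ}
    (h : ReachesAtHeight K L M σ A c) : commSetP K L M σ A ≤ c := by
  obtain ⟨τ, hτ, ω, hω, hc⟩ := h
  exact (commSetP_le_commP hτ).trans ((commP_le_heightP hω).trans
    (heightP_le (head_mem_of_isPathP hω) hc))

end Heights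

lemma adjP_symm {K L : ℕ} {v w : SiteP K L} (h : adjP K L v w) : adjP K L w v := by
  unfold adjP at *
  tauto

lemma HP_eq_neg_card {K L : ℕ} [NeZero K] [NeZero L] (σ : SiteP K L → ℕ) :
    HP K L σ = -(#{v | σ v ≠ 0} : ℤ) := by
  rw [HP, Nat.card_eq_fintype_card, Fintype.card_subtype]

/-- Event times of a sweep into a constant configuration: a site carrying a foreign particle
is vacated at `clearTime`, and every site receives the new type at `fillTime`. -/
structure SweepSchedule (K L : ℕ) where
  clearTime : SiteP K L → ℕ
  fillTime : SiteP K L → ℕ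
  injective : Function.Injective (Sum.elim clearTime fillTime)
  clearTime_lt_fillTime : ∀ v, clearTime v < fillTime v
  clearTime_lt_fillTime_of_adj : ∀ v w, adjP K L v w → clearTime w < fillTime v

namespace SweepSchedule

variable {K L M : ℕ} (S : SweepSchedule K L) (m : ℕ) (σ : SiteP K L → ℕ)

def config (t : ℕ) (v : SiteP K L) : ℕ :=
  if S.fillTime v < t then m else if σ v ≠ m ∧ S.clearTime v < t then 0 else σ v

lemma config_zero : S.config m σ 0 = σ := by
  funext v
  simp [config]

lemma config_eq_const {t : ℕ} (ht : ∀ v, S.fillTime v < t) : S.config m σ t = fun _ => m := by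
  funext v
  simp [config, ht v]

variable {m σ}

lemma config_isWRP (hσ : IsWRP K L M σ) (hm : m ≤ M) (t : ℕ) : IsWRP K L M (S.config m σ t) := by
  refine ⟨fun v => ?_, fun v w hvw => ?_⟩
  · have := hσ.1 v
    unfold config
    split_ifs <;> omega
  · have hσvw := hσ.2 v w hvw
    have hwv := S.clearTime_lt_fillTime_of_adj v w hvw
    have hvw' := S.clearTime_lt_fillTime_of_adj w v (adjP_symm hvw)
    unfold config
    split_ifs <;> omega

lemma config_succ_eq_or (t : ℕ) (v : SiteP K L) :
    S.config m σ t v = S.config m σ (t + 1) v ∨ S.config m σ t v = 0 ∨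
      S.config m σ (t + 1) v = 0 := by
  have := S.clearTime_lt_fillTime v
  unfold config
  split_ifs <;> omega

lemma eventTime_of_config_succ_ne {t : ℕ} {v : SiteP K L}
    (hv : S.config m σ t v ≠ S.config m σ (t + 1) v) :
    Sum.elim S.clearTime S.fillTime (.inl v) = t ∨
      Sum.elim S.clearTime S.fillTime (.inr v) = t := by
  simp only [Sum.elim_inl, Sum.elim_inr]
  unfold config at hv
  split_ifs at hv <;> omega

lemma eq_of_config_succ_ne {t : ℕ} {v w : SiteP K L}
    (hv : S.config m σ t v ≠ S.config m σ (t + 1) v)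
    (hw : S.config m σ t w ≠ S.config m σ (t + 1) w) : v = w := by
  rcases S.eventTime_of_config_succ_ne hv with hv | hv <;>
  rcases S.eventTime_of_config_succ_ne hw with hw | hw <;>
  simpa using S.injective (hv.trans hw.symm)

lemma config_succ (t : ℕ) :
    S.config m σ t = S.config m σ (t + 1) ∨ UpdP K L (S.config m σ t) (S.config m σ (t + 1)) := by
  by_cases hsame : ∀ v, S.config m σ t v = S.config m σ (t + 1) v
  · exact .inl (funext hsame)
  push Not at hsame
  obtain ⟨v, hv⟩ := hsame
  refine .inr ⟨v, (S.config_succ_eq_or t v).resolve_left hv, hv, fun w hwv => ?_⟩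
  by_contra hw
  exact hwv (S.eq_of_config_succ_ne hw hv)

lemma isPathP_config (hσ : IsWRP K L M σ) (hm : m ≤ M) (T : ℕ) :
    IsPathP K L M ((List.range (T + 1)).map (S.config m σ)) σ (S.config m σ T) := by
  refine ⟨by simp, ?_, ?_, ?_, ?_⟩
  · simp [List.range_succ_eq_map, S.config_zero]
  · simp [List.range_succ]
  · simp only [List.mem_map]
    rintro _ ⟨t, -, rfl⟩
    exact S.config_isWRP hσ hm t
  · show List.IsChain _ _
    rw [List.isChain_map, List.isChain_range_succ]
    exact fun t _ => S.config_succ t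

variable [NeZero K] [NeZero L]

variable (m σ) in
def vacated (t : ℕ) : Finset (SiteP K L) :=
  {v | σ v ≠ 0 ∧ σ v ≠ m ∧ S.clearTime v < t ∧ t ≤ S.fillTime v}

lemma HP_config_le (hm : m ≠ 0) (t : ℕ) :
    HP K L (S.config m σ t) ≤ HP K L σ + #(S.vacated m σ t) := by
  have hsub : ({v | σ v ≠ 0} : Finset (SiteP K L)) ⊆
      ({v | S.config m σ t v ≠ 0} : Finset (SiteP K L)) ∪ S.vacated m σ t := by
    intro v
    have : σ v ≠ 0 → S.config m σ t v ≠ 0 ∨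
        σ v ≠ 0 ∧ σ v ≠ m ∧ S.clearTime v < t ∧ t ≤ S.fillTime v := by
      unfold config
      split_ifs <;> omega
    simpa [vacated] using this
  have := (card_le_card hsub).trans (card_union_le _ _)
  rw [HP_eq_neg_card, HP_eq_neg_card]
  omega

lemma reachesAtHeight_stableP (hσ : IsWRP K L M σ) (hm₁ : 1 ≤ m) (hm : m ≤ M) {c : ℤ}
    (hc : ∀ t, (#(S.vacated m σ t) : ℤ) ≤ c) :
    ReachesAtHeight K L M σ (stableP K L M) (HP K L σ + c) := by
  have hend : S.config m σ (univ.sup S.fillTime + 1) = fun _ => m :=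
    S.config_eq_const m σ fun v => Nat.lt_succ_of_le (le_sup (mem_univ v))
  refine ⟨_, ⟨m, hm₁, hm, rfl⟩, _, hend ▸ S.isPathP_config hσ hm _, ?_⟩
  simp only [List.mem_map]
  rintro _ ⟨t, -, rfl⟩
  linarith [S.HP_config_le (σ := σ) (by omega : m ≠ 0) t, hc t]

end SweepSchedule

lemma card_le_of_mem_window {α : Type*} {s : Finset α} {p : α → ℕ} (hp : Set.InjOn p s)
    {t n : ℕ} (hs : ∀ a ∈ s, 2 * p a < t ∧ t ≤ 2 * p a + 2 * n + 1) : #s ≤ n + 1 :=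
  calc #s ≤ #(Icc ((t - 1) / 2 - n) ((t - 1) / 2)) := by
        refine card_le_card_of_injOn p (fun a ha => ?_) hp
        have := hs a ha
        simp only [coe_Icc, Set.mem_Icc]
        omega
    _ ≤ n + 1 := by
        rw [Nat.card_Icc]
        omega

section Lattice

variable {K L M : ℕ} [NeZero K]

lemma val_mul_add_val_injective [NeZero L] :
    Function.Injective fun v : SiteP K L => v.1.val * K + v.2.val := by
  intro v w h
  have hrow : v.2.val = w.2.val := by
    simpa [Nat.mul_add_mod_of_lt (ZMod.val_lt v.2), Nat.mul_add_mod_of_lt (ZMod.val_lt w.2)]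
      using congrArg (· % K) h
  have hcol : v.1.val = w.1.val :=
    Nat.eq_of_mul_eq_mul_right (Nat.pos_of_ne_zero (NeZero.ne K)) (by simp only at h; omega)
  exact Prod.ext (ZMod.val_injective L hcol) (ZMod.val_injective K hrow)

lemma val_mul_add_val_le_of_adjP {v w : SiteP K L} (h : adjP K L v w) :
    w.1.val * K + w.2.val ≤ ((v.1 - 1).val + 2) * K + v.2.val := by
  have hv := ZMod.val_le_val_sub_one_add_one v.1
  rcases h with ⟨hrow, hright | hleft⟩ | ⟨hcol, -⟩
  · have hcol : w.1.val ≤ (v.1 - 1).val + 2 := (hright ▸ ZMod.val_add_one_le v.1).trans (by omega)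
    rw [hrow]
    linarith [Nat.mul_le_mul_right K hcol]
  · rw [hrow, eq_sub_of_add_eq hleft.symm]
    linarith
  · rw [← hcol]
    linarith [Nat.mul_le_mul_right K hv, ZMod.val_lt w.2]

variable (K L) in
/-- Clearing events take the even times and filling events the odd ones: `(c_j, r_i)` is
cleared at step `j K + i` and filled at step `(j + 1) K + i`, where `c_0` counts as `c_L` for
filling. -/
def latticeSweep [NeZero L] : SweepSchedule K L where
  clearTime v := 2 * (v.1.val * K + v.2.val)
  fillTime v := 2 * (((v.1 - 1).val + 2) * K + v.2.val) + 1
  injective := by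
    rintro (v | v) (w | w) h
    · exact congrArg Sum.inl (val_mul_add_val_injective (by simpa using h))
    · simp only [Sum.elim_inl, Sum.elim_inr] at h; omega
    · simp only [Sum.elim_inl, Sum.elim_inr] at h; omega
    · simp only [Sum.elim_inr, add_mul] at h
      have hshifted := @val_mul_add_val_injective K L _ _ (v.1 - 1, v.2) (w.1 - 1, w.2)
        (by dsimp only; omega)
      simp only [Prod.mk.injEq, sub_left_inj] at hshifted
      exact congrArg Sum.inr (Prod.ext hshifted.1 hshifted.2)
  clearTime_lt_fillTime v := by
    have hcol := Nat.mul_le_mul_right K (ZMod.val_le_val_sub_one_add_one v.1)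
    have hrow := ZMod.val_lt v.2
    simp only [add_mul] at hcol ⊢
    omega
  clearTime_lt_fillTime_of_adj v w h := by
    have := val_mul_add_val_le_of_adjP h
    omega

lemma card_vacated_latticeSweep_le [NeZero L] (m : ℕ) (σ : SiteP K L → ℕ) (t : ℕ) :
    #((latticeSweep K L).vacated m σ t) ≤ #{i | σ (0, i) ≠ 0 ∧ σ (0, i) ≠ m} + (K + 1) := by
  set p : SiteP K L → ℕ := fun v => v.1.val * K + v.2.val
  have hsub : (latticeSweep K L).vacated m σ t ⊆
      ({i | σ (0, i) ≠ 0 ∧ σ (0, i) ≠ m} : Finset (ZMod K)).image (fun i => ((0 : ZMod L), i)) ∪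
        ({v | v.1 ≠ 0 ∧ 2 * p v < t ∧ t ≤ 2 * p v + 2 * K + 1} : Finset (SiteP K L)) := by
    rintro ⟨c, i⟩ hv
    rw [SweepSchedule.vacated, mem_filter] at hv
    simp only [latticeSweep] at hv
    rcases eq_or_ne c 0 with rfl | hc
    · exact mem_union_left _ (mem_image.2 ⟨i, by simpa using ⟨hv.2.1, hv.2.2.1⟩, rfl⟩)
    · have hcol := ZMod.val_sub_one_add_one hc
      have hfill : ((c - 1).val + 2) * K = c.val * K + K := by rw [← hcol]; ring
      refine mem_union_right _ (mem_filter.2 ⟨mem_univ _, hc, ?_⟩)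
      simp only [p]
      omega
  have hwindow : #({v | v.1 ≠ 0 ∧ 2 * p v < t ∧ t ≤ 2 * p v + 2 * K + 1} : Finset (SiteP K L)) ≤
      K + 1 :=
    card_le_of_mem_window val_mul_add_val_injective.injOn fun v hv => by
      simp only [mem_filter] at hv
      exact hv.2.2
  calc _ ≤ _ := card_le_card hsub
    _ ≤ _ := card_union_le _ _
    _ ≤ _ := add_le_add card_image_le hwindow

lemma reachesAtHeight_stableP_two_mul_sub_one (hK : 2 ≤ K) [NeZero L] (hM : 1 ≤ M)
    {σ : SiteP K L → ℕ} (hσ : IsWRP K L M σ) :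
    ReachesAtHeight K L M σ (stableP K L M) (HP K L σ + (2 * K - 1)) := by
  have hcolumn : ∀ i : ZMod K, σ (0, i) = 0 ∨ σ (0, i + 1) = 0 ∨ σ (0, i) = σ (0, i + 1) :=
    fun i => hσ.2 _ _ (.inr ⟨rfl, .inl rfl⟩)
  obtain ⟨m, hm₁, hm, hforeign⟩ := exists_type_card_foreign_le hcolumn (fun i => hσ.1 _) hM
  refine (latticeSweep K L).reachesAtHeight_stableP hσ hm₁ hm fun t => ?_
  have := card_vacated_latticeSweep_le m σ t
  omega

end Lattice

section Transpose

variable {K L M : ℕ}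

lemma adjP_swap {v w : SiteP L K} (h : adjP L K v w) : adjP K L v.swap w.swap := by
  unfold adjP at *
  tauto

lemma isWRP_comp_swap {η : SiteP L K → ℕ} (h : IsWRP L K M η) : IsWRP K L M (η ∘ Prod.swap) :=
  ⟨fun _ => h.1 _, fun _ _ hvw => h.2 _ _ (adjP_swap hvw)⟩

lemma updP_comp_swap {η η' : SiteP L K → ℕ} (h : UpdP L K η η') :
    UpdP K L (η ∘ Prod.swap) (η' ∘ Prod.swap) := by
  obtain ⟨v, hv, hne, hrest⟩ := h
  exact ⟨v.swap, hv, hne, fun w hw => hrest w.swap fun h => hw (by simp [← h])⟩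

lemma HP_comp_swap (η : SiteP L K → ℕ) : HP K L (η ∘ Prod.swap) = HP L K η := by
  unfold HP
  congr 2
  exact Nat.card_congr ((Equiv.prodComm _ _).subtypeEquiv fun _ => Iff.rfl)

lemma isPathP_comp_swap {ω : List (SiteP L K → ℕ)} {σ τ : SiteP L K → ℕ}
    (h : IsPathP L K M ω σ τ) :
    IsPathP K L M (ω.map (· ∘ Prod.swap)) (σ ∘ Prod.swap) (τ ∘ Prod.swap) := by
  obtain ⟨hne, hhead, hlast, hWR, hchain⟩ := h
  refine ⟨by simpa using hne, by simp [hhead], by simp [hlast], ?_, ?_⟩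
  · simp only [List.mem_map]
    rintro _ ⟨η, hη, rfl⟩
    exact isWRP_comp_swap (hWR η hη)
  · show List.IsChain _ _
    rw [List.isChain_map]
    exact hchain.imp fun η η' h => h.imp (congrArg (· ∘ Prod.swap)) updP_comp_swap

lemma reachesAtHeight_comp_swap {η : SiteP L K → ℕ} {c : ℤ}
    (h : ReachesAtHeight L K M η (stableP L K M) c) :
    ReachesAtHeight K L M (η ∘ Prod.swap) (stableP K L M) c := by
  obtain ⟨τ, ⟨m, hm₁, hm, rfl⟩, ω, hω, hc⟩ := h
  refine ⟨_, ⟨m, hm₁, hm, rfl⟩, _, isPathP_comp_swap hω, ?_⟩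
  simp only [List.mem_map]
  rintro _ ⟨η', hη', rfl⟩
  rw [HP_comp_swap]
  exact hc η' hη'

lemma reachesAtHeight_stableP_two_mul_min_sub_one (hK : 2 ≤ K) (hL : 2 ≤ L) (hM : 1 ≤ M)
    {σ : SiteP K L → ℕ} (hσ : IsWRP K L M σ) :
    ReachesAtHeight K L M σ (stableP K L M) (HP K L σ + (2 * min K L - 1)) := by
  have : NeZero K := ⟨by omega⟩
  have : NeZero L := ⟨by omega⟩
  rcases le_total K L with hKL | hLK
  · rw [min_eq_left (by exact_mod_cast hKL)]
    exact reachesAtHeight_stableP_two_mul_sub_one hK hM hσ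
  · have hswap :=
      reachesAtHeight_stableP_two_mul_sub_one hL hM (isWRP_comp_swap (M := M) (K := L) hσ)
    rw [min_eq_right (by exact_mod_cast hLK)]
    simpa [HP_comp_swap, Function.comp_assoc] using reachesAtHeight_comp_swap hswap

end Transpose

end WidomRowlinson

theorem shallow_cycles_periodic_general (K L M : ℕ)
    (hK : 2 ≤ K) (hL : 2 ≤ L) (hM : 2 ≤ M)
    (σ : SiteP K L → ℕ) (hσ : IsWRP K L M σ) :
    commSetP K L M σ (stableP K L M) - HP K L σ < GammaP K L := by
  have hbarrier : 2 * (min K L : ℤ) - 1 < GammaP K L := by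
    unfold GammaP
    split_ifs <;> omega
  have hreach := WidomRowlinson.reachesAtHeight_stableP_two_mul_min_sub_one hK hL
    (by omega : 1 ≤ M) hσ
  have := WidomRowlinson.commSetP_le_of_reachesAtHeight hreach
  omega

/-- On the periodic `K × L` lattice, every non-stable WR configuration `σ`
satisfies `Φ(σ, X^s) - H(σ) < Γ(Λ)`. -/
theorem shallow_cycles_periodic (K L M : ℕ)
    (hK : 2 ≤ K) (hL : 2 ≤ L) (hM : 2 ≤ M) (hKL : 6 ≤ K + L)
    (σ : SiteP K L → ℕ) (hσ : IsWRP K L M σ) (hns : σ ∉ stableP K L M) :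
    commSetP K L M σ (stableP K L M) - HP K L σ < GammaP K L :=
  shallow_cycles_periodic_general K L M hK hL hM σ hσ
end

section
/- Consider the Widom–Rowlinson model with M ≥ 2 particle types on the K×L square lattice Λ with open boundary conditions. Then for every pair of distinct stable configurations s, s' ∈ X^s, the communication height satisfies Φ(s,s') − H(s) ≥ min{K,L} + 1. -/
/-- Sites of the `K × L` square lattice with open boundary conditions:
`(j, i)` lies in column `c_j` and row `r_i`. -/
abbrev SiteO (K L : ℕ) := Fin L × Fin K

/-- Adjacency on the open lattice: the two sites agree in one coordinate and
differ by exactly `1` in the other (no wrap-around). -/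
def adjO (K L : ℕ) (v w : SiteO K L) : Prop :=
  (v.2 = w.2 ∧ ((v.1 : ℕ) + 1 = (w.1 : ℕ) ∨ (w.1 : ℕ) + 1 = (v.1 : ℕ))) ∨
  (v.1 = w.1 ∧ ((v.2 : ℕ) + 1 = (w.2 : ℕ) ∨ (w.2 : ℕ) + 1 = (v.2 : ℕ)))

/-- Widom–Rowlinson configurations with `M` particle types on the open lattice. -/
def IsWRO (K L M : ℕ) (σ : SiteO K L → ℕ) : Prop :=
  (∀ v, σ v ≤ M) ∧ ∀ v w, adjO K L v w → σ v = 0 ∨ σ w = 0 ∨ σ v = σ w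

/-- The energy `H(σ) = -#{v : σ v ≠ 0}`. -/
noncomputable def HO (K L : ℕ) (σ : SiteO K L → ℕ) : ℤ :=
  -(Nat.card {v : SiteO K L // σ v ≠ 0} : ℤ)

/-- `σ` and `σ'` are related by a single-site update: they differ at exactly
one site `v`, and moreover `σ v = 0` or `σ' v = 0`. -/
def UpdO (K L : ℕ) (σ σ' : SiteO K L → ℕ) : Prop :=
  ∃ v, (σ v = 0 ∨ σ' v = 0) ∧ σ v ≠ σ' v ∧ ∀ w, w ≠ v → σ w = σ' w

/-- A path `ω : σ → σ'`: a finite nonempty sequence of WR configurations from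
`σ` to `σ'` whose consecutive configurations coincide or are related by a
single-site update. -/
def IsPathO (K L M : ℕ) (ω : List (SiteO K L → ℕ)) (σ σ' : SiteO K L → ℕ) : Prop :=
  ω ≠ [] ∧ ω.head? = some σ ∧ ω.getLast? = some σ' ∧
    (∀ η ∈ ω, IsWRO K L M η) ∧
    ω.Chain' (fun η η' => η = η' ∨ UpdO K L η η')

/-- The height `Φ_ω` of a path: the maximum energy along it. -/
noncomputable def heightO (K L : ℕ) (ω : List (SiteO K L → ℕ)) : ℤ :=
  sSup {h : ℤ | ∃ η ∈ ω, HO K L η = h}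

/-- The communication height `Φ(σ,σ')`: the minimal height over all paths
`ω : σ → σ'`. -/
noncomputable def commO (K L M : ℕ) (σ σ' : SiteO K L → ℕ) : ℤ :=
  sInf {h : ℤ | ∃ ω, IsPathO K L M ω σ σ' ∧ heightO K L ω = h}

/-- The set `X^s = {s^(1),…,s^(M)}` of stable configurations. -/
def stableO (K L M : ℕ) : Set (SiteO K L → ℕ) :=
  {σ | ∃ m : ℕ, 1 ≤ m ∧ m ≤ M ∧ σ = fun _ => m}

/-!
While fewer than `min K L` sites are empty there is a full row and a full column; the
Widom–Rowlinson constraint makes each of them monochromatic, and since they cross they carry the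
same colour. A single update cannot change this colour: a full column before the update and a full
row after it cross, and away from the updated site the two configurations agree. A path that never
empties more than `min K L` sites reaches level `min K L` only for an excursion of one step up and
one step down, which preserves the colour as well; so such a path cannot join `s^(m)` to `s^(m')`.
-/

open Finset

theorem Fin.apply_eq_apply_of_forall_adjacent {α : Type*} {n : ℕ} {f : Fin n → α}
    (h : ∀ a b : Fin n, (a : ℕ) + 1 = b → f a = f b) (a b : Fin n) : f a = f b := by
  suffices key : ∀ k (hk : k < n), f ⟨k, hk⟩ = f ⟨0, by omega⟩ from
    (key a a.2).trans (key b b.2).symm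
  intro k
  induction k with
  | zero => intro _; rfl
  | succ k ih => intro hk; exact (h ⟨k, by omega⟩ ⟨k + 1, hk⟩ rfl).symm.trans (ih _)

namespace WidomRowlinson

variable {K L M m : ℕ} {σ τ ρ : SiteO K L → ℕ}

def numEmpty (K L : ℕ) (σ : SiteO K L → ℕ) : ℕ :=
  (univ.filter fun v => σ v = 0).card

theorem HO_eq_numEmpty_sub (σ : SiteO K L → ℕ) :
    HO K L σ = numEmpty K L σ - L * K := by
  have hsplit := card_filter_add_card_filter_not (s := univ) fun v : SiteO K L => σ v ≠ 0
  simp only [not_not, card_univ, Fintype.card_prod, Fintype.card_fin] at hsplit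
  rw [HO, Nat.card_eq_fintype_card, Fintype.card_subtype, numEmpty]
  omega

theorem numEmpty_const (hm : m ≠ 0) : numEmpty K L (fun _ => m) = 0 := by
  simp [numEmpty, hm]

theorem numEmpty_add_of_eqOn_compl {v : SiteO K L} (h : ∀ w ≠ v, σ w = τ w) :
    numEmpty K L σ + (if τ v = 0 then 1 else 0) =
      numEmpty K L τ + (if σ v = 0 then 1 else 0) := by
  have split_at_v : ∀ ρ : SiteO K L → ℕ, numEmpty K L ρ =
      ∑ x ∈ univ.erase v, (if ρ x = 0 then 1 else 0) + if ρ v = 0 then 1 else 0 := fun ρ => by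
    rw [numEmpty, card_filter, sum_erase_add _ _ (mem_univ v)]
  rw [split_at_v σ, split_at_v τ, sum_congr rfl fun x hx => by rw [h x (ne_of_mem_erase hx)]]
  ring

theorem _root_.UpdO.symm (h : UpdO K L σ τ) : UpdO K L τ σ := by
  obtain ⟨v, hzero, hne, hagree⟩ := h
  exact ⟨v, hzero.symm, hne.symm, fun w hw => (hagree w hw).symm⟩

theorem _root_.UpdO.numEmpty_ne (h : UpdO K L σ τ) : numEmpty K L σ ≠ numEmpty K L τ := by
  obtain ⟨v, hzero, hne, hagree⟩ := h
  have := numEmpty_add_of_eqOn_compl hagree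
  split_ifs at this <;> omega

theorem _root_.UpdO.exists_eq_zero_of_numEmpty_lt (h : UpdO K L σ τ)
    (hlt : numEmpty K L σ < numEmpty K L τ) : ∃ v, τ v = 0 ∧ ∀ w ≠ v, σ w = τ w := by
  obtain ⟨v, hzero, hne, hagree⟩ := h
  refine ⟨v, ?_, hagree⟩
  have := numEmpty_add_of_eqOn_compl hagree
  split_ifs at this <;> omega

theorem exists_full_row_of_numEmpty_lt (h : numEmpty K L σ < K) :
    ∃ i : Fin K, ∀ j, σ (j, i) ≠ 0 := by
  by_contra! hrow
  choose f hf using hrow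
  have := card_le_card_of_injOn (s := univ) (t := univ.filter fun v => σ v = 0)
    (fun i => (f i, i))
    (fun i _ => by simp [hf i]) (fun i _ i' _ hii' => congrArg Prod.snd hii')
  simp only [card_univ, Fintype.card_fin] at this
  exact absurd h (not_lt.2 this)

theorem exists_full_col_of_numEmpty_lt (h : numEmpty K L σ < L) :
    ∃ j : Fin L, ∀ i, σ (j, i) ≠ 0 := by
  by_contra! hcol
  choose f hf using hcol
  have := card_le_card_of_injOn (s := univ) (t := univ.filter fun v => σ v = 0)
    (fun j => (j, f j))
    (fun j _ => by simp [hf j]) (fun j _ j' _ hjj' => congrArg Prod.fst hjj')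
  simp only [card_univ, Fintype.card_fin] at this
  exact absurd h (not_lt.2 this)

theorem _root_.IsWRO.row_eq (hσ : IsWRO K L M σ) {i : Fin K} (hi : ∀ j, σ (j, i) ≠ 0)
    (j j' : Fin L) : σ (j, i) = σ (j', i) :=
  Fin.apply_eq_apply_of_forall_adjacent (f := fun j => σ (j, i)) (fun a b hab =>
    ((hσ.2 (a, i) (b, i) (Or.inl ⟨rfl, Or.inl hab⟩)).resolve_left (hi a)).resolve_left (hi b))
    j j'

theorem _root_.IsWRO.col_eq (hσ : IsWRO K L M σ) {j : Fin L} (hj : ∀ i, σ (j, i) ≠ 0)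
    (i i' : Fin K) : σ (j, i) = σ (j, i') :=
  Fin.apply_eq_apply_of_forall_adjacent (f := fun i => σ (j, i)) (fun a b hab =>
    ((hσ.2 (j, a) (j, b) (Or.inr ⟨rfl, Or.inl hab⟩)).resolve_left (hj a)).resolve_left (hj b))
    i i'

def RowColored (K L : ℕ) (σ : SiteO K L → ℕ) (m : ℕ) : Prop :=
  ∃ i : Fin K, ∀ j, σ (j, i) = m

theorem _root_.IsWRO.rowColored_of_full_row (hσ : IsWRO K L M σ) {i : Fin K}
    (hi : ∀ j, σ (j, i) ≠ 0) {j : Fin L} (hj : σ (j, i) = m) : RowColored K L σ m :=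
  ⟨i, fun j' => (hσ.row_eq hi j' j).trans hj⟩

theorem _root_.IsWRO.col_eq_of_rowColored (hσ : IsWRO K L M σ) (h : RowColored K L σ m)
    {j : Fin L} (hj : ∀ i, σ (j, i) ≠ 0) (i : Fin K) : σ (j, i) = m := by
  obtain ⟨r, hr⟩ := h
  exact (hσ.col_eq hj i r).trans (hr j)

section ColourTransfer

variable (hσ : IsWRO K L M σ) (hτ : IsWRO K L M τ)
  (hσL : numEmpty K L σ < L) (hτK : numEmpty K L τ < K)
include hσ hτ hσL hτK

theorem RowColored.of_compatible (h : RowColored K L σ m)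
    (hστ : ∀ x, σ x ≠ 0 → τ x ≠ 0 → σ x = τ x) : RowColored K L τ m := by
  obtain ⟨q, hq⟩ := exists_full_col_of_numEmpty_lt hσL
  obtain ⟨r, hr⟩ := exists_full_row_of_numEmpty_lt hτK
  exact hτ.rowColored_of_full_row hr
    ((hστ _ (hq r) (hr q)).symm.trans (hσ.col_eq_of_rowColored h hq r))

theorem RowColored.of_eqOn_compl (hL : 2 ≤ L) (h : RowColored K L σ m) {v : SiteO K L}
    (hστ : ∀ w ≠ v, σ w = τ w) : RowColored K L τ m := by
  obtain ⟨q, hq⟩ := exists_full_col_of_numEmpty_lt hσL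
  obtain ⟨r, hr⟩ := exists_full_row_of_numEmpty_lt hτK
  have hqm := hσ.col_eq_of_rowColored h hq
  by_cases hv : (q, r) = v
  · -- the updated site is the crossing, so row `r` is full in `σ` as well
    have hσr : ∀ j, σ (j, r) ≠ 0 := fun j => by
      by_cases hjv : (j, r) = v
      · rw [hjv, ← hv]; exact hq r
      · rw [hστ _ hjv]; exact hr j
    obtain ⟨j, hjq⟩ := Fintype.exists_ne_of_one_lt_card (by rw [Fintype.card_fin]; omega) q
    have hjv : (j, r) ≠ v := by rw [← hv]; simp [hjq]
    exact hτ.rowColored_of_full_row hr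
      ((hστ _ hjv).symm.trans ((hσ.row_eq hσr j q).trans (hqm r)))
  · exact hτ.rowColored_of_full_row hr ((hστ _ hv).symm.trans (hqm r))

theorem RowColored.of_empty_then_fill (hL : 2 ≤ L) (h : RowColored K L σ m) {v w : SiteO K L}
    (hv : ρ v = 0) (hσρ : ∀ x ≠ v, σ x = ρ x) (hw : ρ w = 0) (hτρ : ∀ x ≠ w, τ x = ρ x) :
    RowColored K L τ m := by
  by_cases hvw : v = w
  · subst hvw
    exact h.of_eqOn_compl hσ hτ hσL hτK hL fun x hx => (hσρ x hx).trans (hτρ x hx).symm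
  · refine h.of_compatible hσ hτ hσL hτK fun x hσx hτx => ?_
    have hxv : x ≠ v := by rintro rfl; exact hτx ((hτρ x hvw).trans hv)
    have hxw : x ≠ w := by rintro rfl; exact hσx ((hσρ x (Ne.symm hvw)).trans hw)
    exact (hσρ x hxv).trans (hτρ x hxw).symm

end ColourTransfer

/-- At level `min K L` a configuration may have neither a full row nor a full column, so the
colour is tracked through the configurations one step away. -/
def NearRowColored (K L M m : ℕ) (σ : SiteO K L → ℕ) : Prop :=
  ∀ τ, IsWRO K L M τ → (σ = τ ∨ UpdO K L σ τ) → numEmpty K L τ < min K L → RowColored K L τ m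

theorem NearRowColored.of_rowColored (hL : 2 ≤ L) (hσ : IsWRO K L M σ)
    (hσL : numEmpty K L σ < L) (h : RowColored K L σ m) : NearRowColored K L M m σ := by
  rintro τ hτ (rfl | ⟨v, -, -, hv⟩) hτn
  · exact h
  · exact h.of_eqOn_compl hσ hτ hσL (hτn.trans_le (min_le_left K L)) hL hv

theorem NearRowColored.step (hL : 2 ≤ L) (hσ : IsWRO K L M σ) (hρ : IsWRO K L M ρ)
    (hσn : numEmpty K L σ ≤ min K L) (hρn : numEmpty K L ρ ≤ min K L)
    (hσρ : σ = ρ ∨ UpdO K L σ ρ) (h : NearRowColored K L M m σ) :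
    NearRowColored K L M m ρ := by
  rcases hσρ with rfl | hσρ
  · exact h
  rintro τ hτ (rfl | hρτ) hτn
  · exact h _ hτ (Or.inr hσρ) hτn
  have hτK : numEmpty K L τ < K := hτn.trans_le (min_le_left K L)
  rcases hρn.lt_or_eq with hρn | hρn
  · obtain ⟨v, -, -, hv⟩ := hρτ
    exact (h ρ hρ (Or.inr hσρ) hρn).of_eqOn_compl hρ hτ (hρn.trans_le (min_le_right K L))
      hτK hL hv
  · have hσρlt : numEmpty K L σ < numEmpty K L ρ := (hσn.trans hρn.ge).lt_of_ne hσρ.numEmpty_ne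
    obtain ⟨v, hv, hσv⟩ := hσρ.exists_eq_zero_of_numEmpty_lt hσρlt
    obtain ⟨w, hw, hτw⟩ := hρτ.symm.exists_eq_zero_of_numEmpty_lt (hρn ▸ hτn)
    exact (h σ hσ (Or.inl rfl) (hρn ▸ hσρlt)).of_empty_then_fill hσ hτ
      (hσρlt.trans_le (hρn.trans_le (min_le_right K L))) hτK hL hv hσv hw hτw

theorem exists_mem_min_lt_numEmpty (hK : 0 < K) (hL : 2 ≤ L) {m' : ℕ} (hm : m ≠ 0)
    (hm' : m' ≠ 0) (hmm' : m ≠ m') {ω : List (SiteO K L → ℕ)}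
    (hω : IsPathO K L M ω (fun _ => m) (fun _ => m')) :
    ∃ η ∈ ω, min K L < numEmpty K L η := by
  by_contra! hlow
  obtain ⟨-, hhead, hlast, hwr, hchain⟩ := hω
  obtain ⟨t, rfl⟩ := List.head?_eq_some_iff.mp hhead
  have hstart : NearRowColored K L M m fun _ => m :=
    .of_rowColored hL (hwr _ List.mem_cons_self) (by rw [numEmpty_const hm]; omega)
      ⟨⟨0, hK⟩, fun _ => rfl⟩
  have hnear := (List.IsChain.iff_mem.mp hchain).induction (NearRowColored K L M m) _
    (fun σ ρ ⟨hσω, hρω, hσρ⟩ hσ =>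
      hσ.step hL (hwr σ hσω) (hwr ρ hρω) (hlow σ hσω) (hlow ρ hρω) hσρ)
    fun _ => hstart
  have hend := List.mem_of_getLast? hlast
  obtain ⟨r, hr⟩ := hnear _ hend _ (hwr _ hend) (Or.inl rfl)
    (by rw [numEmpty_const hm']; omega)
  exact hmm' (hr ⟨0, by omega⟩).symm

theorem le_heightO {ω : List (SiteO K L → ℕ)} {η : SiteO K L → ℕ} (hη : η ∈ ω) :
    HO K L η ≤ heightO K L ω :=
  le_csSup ((ω.finite_toSet.image (HO K L)).bddAbove) ⟨η, hη, rfl⟩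

end WidomRowlinson

open WidomRowlinson in
theorem comm_height_lower_bound_open_general (K L M : ℕ)
    (hK : 2 ≤ K) (hL : 2 ≤ L)
    (s s' : SiteO K L → ℕ) (hs : s ∈ stableO K L M) (hs' : s' ∈ stableO K L M)
    (hne : s ≠ s') :
    ((min K L : ℕ) : ℤ) + 1 ≤ commO K L M s s' - HO K L s := by
  obtain ⟨m, hm, -, rfl⟩ := hs
  obtain ⟨m', hm', -, rfl⟩ := hs'
  have hmm' : m ≠ m' := fun h => hne (by rw [h])
  have hminK : min K L ≤ K := min_le_left K L
  rw [HO_eq_numEmpty_sub, numEmpty_const (by omega), commO]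
  rcases Set.eq_empty_or_nonempty {h | ∃ ω, IsPathO K L M ω (fun _ => m) (fun _ => m') ∧
      heightO K L ω = h} with hnone | hpaths
  · -- `sInf ∅ = 0` in `ℤ`, and the bound survives this junk value
    rw [hnone, Int.csInf_empty]
    have : 2 * K ≤ L * K := Nat.mul_le_mul_right K hL
    push_cast
    omega
  · suffices ((min K L : ℕ) : ℤ) + 1 - L * K ≤ sInf _ by push_cast at this ⊢; linarith
    refine le_csInf hpaths ?_
    rintro _ ⟨ω, hω, rfl⟩
    obtain ⟨η, hη, hlt⟩ := exists_mem_min_lt_numEmpty (by omega) hL (by omega) (by omega) hmm' hω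
    have := le_heightO hη
    rw [HO_eq_numEmpty_sub] at this
    omega

/-- Lower bound on the communication height between distinct stable
configurations of the Widom–Rowlinson model on the open `K × L` lattice:
`Φ(s,s') - H(s) ≥ min{K,L} + 1`. -/
theorem comm_height_lower_bound_open (K L M : ℕ)
    (hK : 2 ≤ K) (hL : 2 ≤ L) (hM : 2 ≤ M)
    (s s' : SiteO K L → ℕ) (hs : s ∈ stableO K L M) (hs' : s' ∈ stableO K L M)
    (hne : s ≠ s') :
    ((min K L : ℕ) : ℤ) + 1 ≤ commO K L M s s' - HO K L s :=
  comm_height_lower_bound_open_general K L M hK hL s s' hs hs' hne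
end

section
/- Consider the Widom–Rowlinson model with M ≥ 2 particle types on the K×L square lattice Λ with open boundary conditions. Then for every pair of distinct stable configurations s, s' ∈ X^s there exists a path ω* : s → s' in X such that Φ_{ω*} − H(s) = min{K,L} + 1. -/
theorem adjO_symm {K L : ℕ} {v w : SiteO K L} (h : adjO K L v w) : adjO K L w v := by
  rcases h with ⟨h1, h2⟩ | ⟨h1, h2⟩
  · exact Or.inl ⟨h1.symm, h2.symm⟩
  · exact Or.inr ⟨h1.symm, h2.symm⟩

theorem adjO_swap {K L : ℕ} {v w : SiteO K L} (h : adjO K L v w) : adjO L K v.swap w.swap :=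
  h.symm

def HasBandwidth {K L N : ℕ} (e : SiteO K L ≃ Fin N) (D : ℕ) : Prop :=
  ∀ v w, adjO K L v w → (e v : ℕ) ≤ e w + D

theorem hasBandwidth_finProdFinEquiv (K L : ℕ) :
    HasBandwidth (finProdFinEquiv : SiteO K L ≃ Fin (L * K)) K := by
  rintro ⟨j, i⟩ ⟨j', i'⟩ h
  simp only [adjO, finProdFinEquiv_apply_val] at h ⊢
  rcases h with ⟨rfl, hj⟩ | ⟨rfl, hi⟩
  · have : K * j ≤ K * j' + K := by
      rw [← Nat.mul_succ]; exact Nat.mul_le_mul_left K (by omega)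
    omega
  · omega

theorem hasBandwidth_prodComm_trans_finProdFinEquiv (K L : ℕ) :
    HasBandwidth ((Equiv.prodComm _ _).trans finProdFinEquiv : SiteO K L ≃ Fin (K * L)) L :=
  fun v w h => hasBandwidth_finProdFinEquiv L K v.swap w.swap (adjO_swap h)

theorem Fin.card_subtype_le_val_lt {N a r : ℕ} (har : a ≤ r) (hr : r ≤ N) :
    Fintype.card {x : Fin N // a ≤ (x : ℕ) ∧ (x : ℕ) < r} = r - a := by
  rw [Fintype.card_subtype]
  have : Finset.univ.filter (fun x : Fin N => a ≤ (x : ℕ) ∧ (x : ℕ) < r) =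
      Finset.univ.filter (fun x : Fin N => (x : ℕ) < r) \
        Finset.univ.filter (fun x : Fin N => (x : ℕ) < a) := by
    ext x; simp only [Finset.mem_filter, Finset.mem_univ, true_and, Finset.mem_sdiff]; omega
  rw [this, Finset.card_sdiff_of_subset (Finset.monotone_filter_right _ fun _ _ => by omega),
    Fin.card_filter_val_lt, Fin.card_filter_val_lt]
  omega

section GapConf

variable {V : Type*} {N : ℕ} (e : V ≃ Fin N) (m m' : ℕ)

def gapConf (a r : ℕ) : V → ℕ :=
  fun v => if (e v : ℕ) < a then m' else if (e v : ℕ) < r then 0 else m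

variable {m m'}

theorem gapConf_ne_zero_iff (hm : m ≠ 0) (hm' : m' ≠ 0) (a r : ℕ) (v : V) :
    gapConf e m m' a r v ≠ 0 ↔ ¬(a ≤ (e v : ℕ) ∧ (e v : ℕ) < r) := by
  unfold gapConf
  split_ifs <;> simp [*]

theorem card_gapConf_ne_zero (hm : m ≠ 0) (hm' : m' ≠ 0) {a r : ℕ} (har : a ≤ r)
    (hr : r ≤ N) :
    Nat.card {v // gapConf e m m' a r v ≠ 0} = N - (r - a) := by
  rw [Nat.card_congr (e.subtypeEquiv (q := fun x : Fin N => ¬(a ≤ (x : ℕ) ∧ (x : ℕ) < r))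
      (gapConf_ne_zero_iff e hm hm' a r)),
    Nat.card_eq_fintype_card, Fintype.card_subtype_compl, Fintype.card_fin,
    Fin.card_subtype_le_val_lt har hr]

end GapConf

section GapConfLattice

variable {K L M N : ℕ} (e : SiteO K L ≃ Fin N) {m m' : ℕ}

theorem HO_gapConf (hm : m ≠ 0) (hm' : m' ≠ 0) {a r : ℕ} (har : a ≤ r) (hr : r ≤ N) :
    HO K L (gapConf e m m' a r) = r - a - N := by
  rw [HO, card_gapConf_ne_zero e hm hm' har hr]
  omega

theorem isWRO_gapConf {D : ℕ} (he : HasBandwidth e D) (hmM : m ≤ M) (hm'M : m' ≤ M)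
    {a r : ℕ} (hgap : a = 0 ∨ a + D ≤ r ∨ N ≤ r) :
    IsWRO K L M (gapConf e m m' a r) := by
  refine ⟨fun v => ?_, fun v w hvw => ?_⟩
  · unfold gapConf; split_ifs <;> omega
  · have := he v w hvw
    have := he w v (adjO_symm hvw)
    have := (e v).isLt
    have := (e w).isLt
    unfold gapConf
    split_ifs <;> omega

theorem updO_gapConf_fill (hm' : m' ≠ 0) {a r : ℕ} (har : a < r) (hr : r ≤ N) :
    UpdO K L (gapConf e m m' a r) (gapConf e m m' (a + 1) r) := by
  refine ⟨e.symm ⟨a, by omega⟩, ?_, ?_, fun w hw => ?_⟩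
  · simp [gapConf, har]
  · simp [gapConf, har, hm'.symm]
  · have : (e w : ℕ) ≠ a := fun h => hw (e.symm_apply_eq.2 (Fin.ext h.symm)).symm
    unfold gapConf
    split_ifs <;> omega

theorem updO_gapConf_vacate (hm : m ≠ 0) {a r : ℕ} (har : a ≤ r) (hr : r < N) :
    UpdO K L (gapConf e m m' a r) (gapConf e m m' a (r + 1)) := by
  refine ⟨e.symm ⟨r, hr⟩, ?_, ?_, fun w hw => ?_⟩
  · simp [gapConf, har.not_gt]
  · simp [gapConf, har.not_gt, hm]
  · have : (e w : ℕ) ≠ r := fun h => hw (e.symm_apply_eq.2 (Fin.ext h.symm)).symm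
    unfold gapConf
    split_ifs <;> omega

theorem gapConf_zero : gapConf e m m' 0 0 = fun _ => m := by
  funext v; simp [gapConf]

theorem gapConf_self : gapConf e m m' N N = fun _ => m' := by
  funext v; simp [gapConf]

end GapConfLattice

/-- After `n` moves the vacant window is `[n - sweepFront D N n, sweepFront D N n)`: the front
advances alone up to `D + 1`, then back and front advance in turn until the front reaches `N`,
and then the back catches up, at move `2 * N`. -/
def sweepFront (D N n : ℕ) : ℕ := min n (min N (D + 1 + (n - (D + 1)) / 2))

section Sweep

variable {D N n : ℕ}

theorem sweepFront_zero : sweepFront D N 0 = 0 := by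
  simp [sweepFront]

theorem sweepFront_two_mul (hDN : D + 1 ≤ N) : sweepFront D N (2 * N) = N := by
  unfold sweepFront; omega

theorem sweepFront_peak (hDN : D + 1 ≤ N) : sweepFront D N (D + 1) = D + 1 := by
  unfold sweepFront; omega

theorem sweepFront_window (hn : n ≤ 2 * N) :
    n - sweepFront D N n ≤ sweepFront D N n ∧ sweepFront D N n ≤ N ∧
      sweepFront D N n ≤ n - sweepFront D N n + (D + 1) := by
  unfold sweepFront; omega

theorem sweepFront_separates :
    n - sweepFront D N n = 0 ∨ n - sweepFront D N n + D ≤ sweepFront D N n ∨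
      N ≤ sweepFront D N n := by
  unfold sweepFront; omega

theorem sweepFront_succ (hn : n < 2 * N) :
    (sweepFront D N (n + 1) = sweepFront D N n + 1 ∧
        n + 1 - sweepFront D N (n + 1) = n - sweepFront D N n ∧
        n - sweepFront D N n ≤ sweepFront D N n ∧ sweepFront D N n < N) ∨
      (sweepFront D N (n + 1) = sweepFront D N n ∧
        n + 1 - sweepFront D N (n + 1) = n - sweepFront D N n + 1 ∧
        n - sweepFront D N n < sweepFront D N n ∧ sweepFront D N n ≤ N) := by
  unfold sweepFront; omega

end Sweep

section Paths

variable {K L M : ℕ}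

theorem isPathO_map_range (f : ℕ → SiteO K L → ℕ) (n : ℕ)
    (hwr : ∀ k ≤ n, IsWRO K L M (f k)) (hupd : ∀ k < n, UpdO K L (f k) (f (k + 1))) :
    IsPathO K L M ((List.range (n + 1)).map f) (f 0) (f n) := by
  refine ⟨by simp, by simp [List.head?_range], by simp [List.getLast?_range], ?_, ?_⟩
  · simp only [List.mem_map, List.mem_range]
    rintro _ ⟨k, hk, rfl⟩
    exact hwr k (Nat.le_of_lt_succ hk)
  · rw [List.Chain', List.isChain_map, List.isChain_range_succ]
    exact fun k hk => Or.inr (hupd k hk)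

theorem heightO_eq_of_forall_le {ω : List (SiteO K L → ℕ)} {η : SiteO K L → ℕ}
    (hη : η ∈ ω) (hmax : ∀ ζ ∈ ω, HO K L ζ ≤ HO K L η) :
    heightO K L ω = HO K L η :=
  IsGreatest.csSup_eq ⟨⟨η, hη, rfl⟩, by rintro _ ⟨ζ, hζ, rfl⟩; exact hmax ζ hζ⟩

end Paths

theorem exists_path_of_hasBandwidth {K L M N D m m' : ℕ} {e : SiteO K L ≃ Fin N}
    (he : HasBandwidth e D) (hDN : D + 1 ≤ N) (hm : m ≠ 0) (hm' : m' ≠ 0) (hmM : m ≤ M)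
    (hm'M : m' ≤ M) :
    ∃ ω, IsPathO K L M ω (fun _ => m) (fun _ => m') ∧
      heightO K L ω - HO K L (fun _ => m) = D + 1 := by
  obtain ⟨f, hf⟩ : ∃ f : ℕ → SiteO K L → ℕ,
      ∀ n, f n = gapConf e m m' (n - sweepFront D N n) (sweepFront D N n) := ⟨_, fun _ => rfl⟩
  have hf0 : f 0 = fun _ => m := by
    rw [hf, sweepFront_zero]
    exact gapConf_zero e
  have hfN : f (2 * N) = fun _ => m' := by
    rw [hf, sweepFront_two_mul hDN, two_mul, Nat.add_sub_cancel]
    exact gapConf_self e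
  have hHf : ∀ n ≤ 2 * N, HO K L (f n) = sweepFront D N n - (n - sweepFront D N n : ℕ) - N :=
    fun n hn =>
      (hf n).symm ▸ HO_gapConf e hm hm' (sweepFront_window hn).1 (sweepFront_window hn).2.1
  have hpath : IsPathO K L M ((List.range (2 * N + 1)).map f) (f 0) (f (2 * N)) := by
    refine isPathO_map_range f (2 * N)
      (fun n _ => (hf n).symm ▸ isWRO_gapConf e he hmM hm'M sweepFront_separates) fun n hn => ?_
    rcases sweepFront_succ (D := D) hn with ⟨hr, ha, hle, hlt⟩ | ⟨hr, ha, hlt, hle⟩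
    · rw [hf, hf, ha, hr]; exact updO_gapConf_vacate e hm hle hlt
    · rw [hf, hf, ha, hr]; exact updO_gapConf_fill e hm' hlt hle
  have hheight : heightO K L ((List.range (2 * N + 1)).map f) = HO K L (f (D + 1)) := by
    refine heightO_eq_of_forall_le (List.mem_map_of_mem (List.mem_range.2 (by omega))) ?_
    simp only [List.mem_map, List.mem_range]
    rintro _ ⟨n, hn, rfl⟩
    have := (sweepFront_window (D := D) (by omega : n ≤ 2 * N)).2.2
    rw [hHf n (by omega), hHf (D + 1) (by omega), sweepFront_peak hDN]
    omega
  refine ⟨_, hf0 ▸ hfN ▸ hpath, ?_⟩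
  rw [hheight, ← hf0, hHf _ (by omega), hHf _ (by omega), sweepFront_peak hDN, sweepFront_zero]
  omega

theorem reference_path_open_general (K L M : ℕ)
    (hK : 2 ≤ K) (hL : 2 ≤ L)
    (s s' : SiteO K L → ℕ) (hs : s ∈ stableO K L M) (hs' : s' ∈ stableO K L M) :
    ∃ ω : List (SiteO K L → ℕ),
      IsPathO K L M ω s s' ∧
        heightO K L ω - HO K L s = ((min K L : ℕ) : ℤ) + 1 := by
  obtain ⟨m, hm, hmM, rfl⟩ := hs
  obtain ⟨m', hm', hm'M, rfl⟩ := hs'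
  rcases le_total K L with hKL | hLK
  · rw [min_eq_left hKL]
    exact exists_path_of_hasBandwidth (hasBandwidth_finProdFinEquiv K L)
      (by nlinarith) (by omega) (by omega) hmM hm'M
  · rw [min_eq_right hLK]
    exact exists_path_of_hasBandwidth (hasBandwidth_prodComm_trans_finProdFinEquiv K L)
      (by nlinarith) (by omega) (by omega) hmM hm'M

/-- Reference path between distinct stable configurations of the
Widom–Rowlinson model on the open `K × L` lattice: there is a path whose
height above `H(s)` is exactly `min{K,L} + 1`. -/
theorem reference_path_open (K L M : ℕ)
    (hK : 2 ≤ K) (hL : 2 ≤ L) (hM : 2 ≤ M)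
    (s s' : SiteO K L → ℕ) (hs : s ∈ stableO K L M) (hs' : s' ∈ stableO K L M)
    (hne : s ≠ s') :
    ∃ ω : List (SiteO K L → ℕ),
      IsPathO K L M ω s s' ∧
        heightO K L ω - HO K L s = ((min K L : ℕ) : ℤ) + 1 :=
  reference_path_open_general K L M hK hL s s' hs hs'
end

section
/- (Reduction algorithm, periodic boundary conditions.) Consider the Widom–Rowlinson model with M ≥ 2 particle types on the K×L square lattice Λ with periodic boundary conditions. Let m ∈ {1,…,M} and let σ ∈ X be a configuration such that σ(v) ∈ {0, m} for every site v in the first vertical stripe C_1 = c_0 ∪ c_1 (the union of the first two columns). Then there exists a path ω : σ → s^(m) in X with Φ_ω ≤ H(σ) + 1; in particular Φ(σ, s^(m)) − H(σ) ≤ 1. -/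
/-!
Induct on the number of sites not occupied by type `m`. If a particle of another type is left,
take one, at `v`, in the leftmost column `c_j` that contains one. The stripe forces `j ≥ 2`, so the
left neighbour `u` of `v` and all neighbours of `u` other than `v` lie in the columns `c_{j-1}` and
`c_{j-2}`, which hold no such particle. The WR constraint then forces `σ u = 0`, and removing the
particle at `v` before placing an `m` at `u` is a path that rises by one unit of energy and comes
back. If only type `m` is left, any empty site can be filled with `m`, which lowers the energy.
-/

open Function Relation

theorem ZMod.val_add_one_of_ne_zero {n : ℕ} [NeZero n] {a : ZMod n} (h : a + 1 ≠ 0) :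
    (a + 1).val = a.val + 1 := by
  have hcast : a + 1 = ((a.val + 1 : ℕ) : ZMod n) := by simp
  rw [hcast] at h ⊢
  rw [ZMod.val_natCast]
  rcases (show a.val + 1 ≤ n from a.val_lt).lt_or_eq with hlt | heq
  · exact Nat.mod_eq_of_lt hlt
  · exact absurd (by rw [heq, ZMod.natCast_self]) h

section Configurations

variable {K L M : ℕ}

def StripeClean (m : ℕ) (σ : SiteP K L → ℕ) : Prop :=
  ∀ v : SiteP K L, v.1 = 0 ∨ v.1 = 1 → σ v = 0 ∨ σ v = m

theorem StripeClean.update {m t : ℕ} {σ : SiteP K L → ℕ} (h : StripeClean m σ)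
    (ht : t = 0 ∨ t = m) (v : SiteP K L) : StripeClean m (update σ v t) := by
  intro w hw
  rcases eq_or_ne w v with rfl | hwv
  · simpa using ht
  · simpa [hwv] using h w hw

theorem adjP.symm {v w : SiteP K L} (h : adjP K L v w) : adjP K L w v := by
  rcases h with ⟨h₁, h₂⟩ | ⟨h₁, h₂⟩
  · exact Or.inl ⟨h₁.symm, h₂.symm⟩
  · exact Or.inr ⟨h₁.symm, h₂.symm⟩

theorem IsWRP.update_zero {σ : SiteP K L → ℕ} (hσ : IsWRP K L M σ) (v : SiteP K L) :
    IsWRP K L M (update σ v 0) := by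
  refine ⟨fun w => ?_, fun x y hxy => ?_⟩
  · rcases eq_or_ne w v with rfl | hw
    · simp
    · simpa [hw] using hσ.1 w
  · rcases eq_or_ne x v with rfl | hx
    · simp
    rcases eq_or_ne y v with rfl | hy
    · simp
    simpa [hx, hy] using hσ.2 x y hxy

theorem IsWRP.update_of_forall_adjP {σ : SiteP K L → ℕ} {t : ℕ} (hσ : IsWRP K L M σ)
    (ht : t ≤ M) {v : SiteP K L} (hnb : ∀ w, adjP K L v w → σ w = 0 ∨ σ w = t) :
    IsWRP K L M (update σ v t) := by
  refine ⟨fun w => ?_, fun x y hxy => ?_⟩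
  · rcases eq_or_ne w v with rfl | hw
    · simpa using ht
    · simpa [hw] using hσ.1 w
  · rcases eq_or_ne x v with rfl | hx
    · rcases eq_or_ne y x with rfl | hy
      · simp
      · simp only [update_self, update_of_ne hy]
        exact Or.inr ((hnb y hxy).imp_right Eq.symm)
    rcases eq_or_ne y v with rfl | hy
    · simp only [update_self, update_of_ne hx]
      exact (hnb x hxy.symm).imp_right Or.inr
    simpa [hx, hy] using hσ.2 x y hxy

theorem HP_nonpos (σ : SiteP K L → ℕ) : HP K L σ ≤ 0 := by
  simp [HP]

theorem UpdP.update {σ : SiteP K L → ℕ} {v : SiteP K L} {t : ℕ} (hne : σ v ≠ t)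
    (h0 : σ v = 0 ∨ t = 0) : UpdP K L σ (update σ v t) :=
  ⟨v, by simpa using h0, by simpa using hne, fun w hw => (update_of_ne hw _ _).symm⟩

theorem HP_eq_neg_ncard (σ : SiteP K L → ℕ) : HP K L σ = -({v | σ v ≠ 0}.ncard : ℤ) := by
  rw [HP, ← Nat.card_coe_set_eq]
  rfl

theorem setOf_update_ne_eq {σ : SiteP K L → ℕ} {v : SiteP K L} {m t : ℕ} (h : σ v ≠ m)
    (ht : t ≠ m) : {w | update σ v t w ≠ m} = {w | σ w ≠ m} := by
  ext w
  rcases eq_or_ne w v with rfl | hw <;> simp [*]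

variable [NeZero K] [NeZero L]

theorem HP_update_zero {σ : SiteP K L → ℕ} {v : SiteP K L} (h : σ v ≠ 0) :
    HP K L (update σ v 0) = HP K L σ + 1 := by
  have hset : {w | update σ v 0 w ≠ 0} = {w | σ w ≠ 0} \ {v} := by
    ext w
    rcases eq_or_ne w v with rfl | hw <;> simp [*]
  have hcard := Set.ncard_sdiff_singleton_add_one (s := {w | σ w ≠ 0}) h
  rw [HP_eq_neg_ncard, HP_eq_neg_ncard, hset, ← hcard]
  push_cast
  ring

theorem HP_update_of_eq_zero {σ : SiteP K L → ℕ} {v : SiteP K L} {t : ℕ} (h : σ v = 0)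
    (ht : t ≠ 0) : HP K L (update σ v t) = HP K L σ - 1 := by
  have hset : {w | update σ v t w ≠ 0} = insert v {w | σ w ≠ 0} := by
    ext w
    rcases eq_or_ne w v with rfl | hw <;> simp [*]
  rw [HP_eq_neg_ncard, HP_eq_neg_ncard, hset, Set.ncard_insert_of_notMem (by simpa using h)]
  push_cast
  ring

theorem ncard_update_ne_lt {σ : SiteP K L → ℕ} {v : SiteP K L} {m : ℕ} (h : σ v ≠ m) :
    {w | update σ v m w ≠ m}.ncard < {w | σ w ≠ m}.ncard := by
  have hset : {w | update σ v m w ≠ m} = {w | σ w ≠ m} \ {v} := by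
    ext w
    rcases eq_or_ne w v with rfl | hw <;> simp [*]
  rw [hset]
  exact Set.ncard_sdiff_singleton_lt_of_mem h

end Configurations

section Paths

variable {K L M : ℕ}

/-- Paths of height at most `b` out of a WR configuration of energy at most `b` are the chains of
this relation. -/
def LowStep (K L M : ℕ) (b : ℤ) (η η' : SiteP K L → ℕ) : Prop :=
  IsWRP K L M η' ∧ HP K L η' ≤ b ∧ UpdP K L η η'

theorem LowStep.mono {b c : ℤ} (hbc : b ≤ c) {η η' : SiteP K L → ℕ}
    (h : LowStep K L M b η η') : LowStep K L M c η η' :=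
  ⟨h.1, h.2.1.trans hbc, h.2.2⟩

theorem IsWRP.of_reflTransGen_lowStep {b : ℤ} {σ τ : SiteP K L → ℕ} (hσ : IsWRP K L M σ)
    (h : ReflTransGen (LowStep K L M b) σ τ) : IsWRP K L M τ := by
  induction h with
  | refl => exact hσ
  | tail _ hstep => exact hstep.1

theorem HP_le_heightP {ω : List (SiteP K L → ℕ)} {η : SiteP K L → ℕ} (hη : η ∈ ω) :
    HP K L η ≤ heightP K L ω :=
  le_csSup ⟨0, by rintro _ ⟨η, -, rfl⟩; exact HP_nonpos η⟩ ⟨η, hη, rfl⟩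

theorem commP_le_heightP {ω : List (SiteP K L → ℕ)} {σ τ : SiteP K L → ℕ}
    (hω : IsPathP K L M ω σ τ) : commP K L M σ τ ≤ heightP K L ω := by
  refine csInf_le ⟨HP K L σ, ?_⟩ ⟨ω, hω, rfl⟩
  rintro _ ⟨ω', hω', rfl⟩
  exact HP_le_heightP (List.mem_of_mem_head? hω'.2.1)

theorem exists_isPathP_of_reflTransGen {b : ℤ} {σ τ : SiteP K L → ℕ} (hσ : IsWRP K L M σ)
    (hb : HP K L σ ≤ b) (h : ReflTransGen (LowStep K L M b) σ τ) :
    ∃ ω, IsPathP K L M ω σ τ ∧ heightP K L ω ≤ b := by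
  obtain ⟨l, hchain, hlast⟩ := List.exists_isChain_cons_of_relationReflTransGen h
  have hall : ∀ η ∈ σ :: l, IsWRP K L M η ∧ HP K L η ≤ b :=
    hchain.induction _ _ (fun _ _ hstep _ => ⟨hstep.1, hstep.2.1⟩) fun _ => ⟨hσ, hb⟩
  refine ⟨σ :: l, ⟨List.cons_ne_nil _ _, rfl, ?_, fun η hη => (hall η hη).1,
    hchain.imp fun _ _ hstep => Or.inr hstep.2.2⟩, ?_⟩
  · rw [List.getLast?_eq_some_getLast (List.cons_ne_nil _ _), hlast]
  · refine csSup_le ⟨_, σ, List.mem_cons_self, rfl⟩ ?_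
    rintro _ ⟨η, hη, rfl⟩
    exact (hall η hη).2

end Paths

section Moves

variable {K L M : ℕ}

theorem val_fst_le_of_adjP [NeZero L] {u w : SiteP K L} (h : adjP K L u w)
    (hw : w ≠ (u.1 + 1, u.2)) (hu : u.1 ≠ 0) : w.1.val ≤ u.1.val := by
  rcases h with ⟨h₂, h₁ | h₁⟩ | ⟨h₁, -⟩
  · exact (hw (Prod.ext h₁ h₂.symm)).elim
  · rw [h₁] at hu ⊢
    rw [ZMod.val_add_one_of_ne_zero hu]
    exact Nat.le_succ _
  · rw [h₁]

variable [NeZero K] [NeZero L]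

theorem lowStep_update_of_eq_zero {b : ℤ} {σ : SiteP K L → ℕ} {v : SiteP K L} {t : ℕ}
    (hσ : IsWRP K L M σ) (htM : t ≤ M) (ht : t ≠ 0) (hv : σ v = 0)
    (hnb : ∀ w, adjP K L v w → σ w = 0 ∨ σ w = t) (hb : HP K L σ - 1 ≤ b) :
    LowStep K L M b σ (update σ v t) :=
  ⟨hσ.update_of_forall_adjP htM hnb, by rwa [HP_update_of_eq_zero hv ht],
    UpdP.update (by rw [hv]; exact ht.symm) (Or.inl hv)⟩

theorem lowStep_update_zero {σ : SiteP K L → ℕ} {v : SiteP K L} (hσ : IsWRP K L M σ)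
    (hv : σ v ≠ 0) : LowStep K L M (HP K L σ + 1) σ (update σ v 0) :=
  ⟨hσ.update_zero v, (HP_update_zero hv).le, UpdP.update hv (Or.inr rfl)⟩

theorem reflTransGen_lowStep_swap {m : ℕ} {σ : SiteP K L → ℕ} {u v : SiteP K L}
    (hσ : IsWRP K L M σ) (hmM : m ≤ M) (hm : m ≠ 0) (huv : u ≠ v) (hu : σ u = 0)
    (hv : σ v ≠ 0) (hnb : ∀ w, adjP K L u w → w ≠ v → σ w = 0 ∨ σ w = m) :
    ReflTransGen (LowStep K L M (HP K L σ + 1)) σ (update (update σ v 0) u m) := by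
  have hnb' : ∀ w, adjP K L u w → update σ v 0 w = 0 ∨ update σ v 0 w = m := by
    intro w hw
    rcases eq_or_ne w v with rfl | hwv
    · simp
    · simpa [hwv] using hnb w hw hwv
  refine .tail (.single (lowStep_update_zero hσ hv)) ?_
  exact lowStep_update_of_eq_zero (hσ.update_zero v) hmM hm (by simp [huv, hu]) hnb'
    (by rw [HP_update_zero hv]; linarith)

theorem exists_swap_pair {m : ℕ} {σ : SiteP K L → ℕ} (hσ : IsWRP K L M σ)
    (hstripe : StripeClean m σ) (hforeign : ∃ v, σ v ≠ 0 ∧ σ v ≠ m) :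
    ∃ u v, u ≠ v ∧ σ u = 0 ∧ σ v ≠ 0 ∧ σ v ≠ m ∧
      ∀ w, adjP K L u w → w ≠ v → σ w = 0 ∨ σ w = m := by
  obtain ⟨v, ⟨hv0, hvm⟩, hmin⟩ := Set.exists_min_image {v | σ v ≠ 0 ∧ σ v ≠ m}
    (fun v => v.1.val) (Set.toFinite _) hforeign
  have hleft : ∀ w : SiteP K L, w.1.val < v.1.val → σ w = 0 ∨ σ w = m := by
    intro w hw
    by_contra! h
    exact (hmin w h).not_gt hw
  have hv1 : v.1 ≠ 0 ∧ v.1 ≠ 1 := by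
    constructor <;> intro h <;> rcases hstripe v (by simp [h]) with h' | h' <;> contradiction
  set u : SiteP K L := (v.1 - 1, v.2)
  have hvu : v = (u.1 + 1, u.2) := by simp [u]
  have hu1 : u.1 ≠ 0 := sub_ne_zero.2 hv1.2
  have hval : v.1.val = u.1.val + 1 := by
    rw [hvu]
    exact ZMod.val_add_one_of_ne_zero (by simpa [u] using hv1.1)
  have hu : σ u = 0 := by
    have hadj : adjP K L u v := Or.inl ⟨rfl, Or.inl (by simp [u])⟩
    rcases hleft u (by omega) with h | h
    · exact h
    rcases hσ.2 u v hadj with h' | h' | h'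
    · exact h'
    · exact absurd h' hv0
    · exact absurd (h'.symm.trans h) hvm
  refine ⟨u, v, fun h => by simp [h] at hval, hu, hv0, hvm, fun w hw hwv => hleft w ?_⟩
  have := val_fst_le_of_adjP hw (hvu ▸ hwv) hu1
  omega

theorem exists_reflTransGen_lowStep_ncard_lt {m : ℕ} {σ : SiteP K L → ℕ} (hm : m ≠ 0)
    (hmM : m ≤ M) (hσ : IsWRP K L M σ) (hstripe : StripeClean m σ) (hne : σ ≠ fun _ => m) :
    ∃ σ', ReflTransGen (LowStep K L M (HP K L σ + 1)) σ σ' ∧ StripeClean m σ' ∧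
      HP K L σ' ≤ HP K L σ ∧ {w | σ' w ≠ m}.ncard < {w | σ w ≠ m}.ncard := by
  by_cases hforeign : ∃ v, σ v ≠ 0 ∧ σ v ≠ m
  · obtain ⟨u, v, huv, hu, hv, hvm, hnb⟩ := exists_swap_pair hσ hstripe hforeign
    refine ⟨_, reflTransGen_lowStep_swap hσ hmM hm huv hu hv hnb,
      (hstripe.update (.inl rfl) v).update (.inr rfl) u, ?_, ?_⟩
    · rw [HP_update_of_eq_zero (by simp [huv, hu]) hm, HP_update_zero hv]
      linarith
    · rw [← setOf_update_ne_eq hvm hm.symm]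
      exact ncard_update_ne_lt (by simp [huv, hu, hm.symm])
  · push Not at hforeign
    obtain ⟨v, hvm⟩ : ∃ v, σ v ≠ m := by
      by_contra! h
      exact hne (funext h)
    have hv : σ v = 0 := by
      by_contra h
      exact hvm (hforeign v h)
    refine ⟨update σ v m, .single (lowStep_update_of_eq_zero hσ hmM hm hv
      (fun w _ => (em (σ w = 0)).imp_right (hforeign w)) (by linarith)),
      hstripe.update (.inr rfl) v, ?_, ncard_update_ne_lt hvm⟩
    rw [HP_update_of_eq_zero hv hm]
    linarith

theorem reflTransGen_lowStep_const {m : ℕ} (hm : m ≠ 0) (hmM : m ≤ M) {σ : SiteP K L → ℕ}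
    (hσ : IsWRP K L M σ) (hstripe : StripeClean m σ) :
    ReflTransGen (LowStep K L M (HP K L σ + 1)) σ (fun _ => m) := by
  induction hn : {w | σ w ≠ m}.ncard using Nat.strong_induction_on generalizing σ with
  | _ n ih =>
    by_cases hconst : σ = fun _ => m
    · rw [hconst]
    obtain ⟨σ', hpath, hstripe', hH, hlt⟩ :=
      exists_reflTransGen_lowStep_ncard_lt hm hmM hσ hstripe hconst
    have hrest := ih _ (hn ▸ hlt) (hσ.of_reflTransGen_lowStep hpath) hstripe' rfl
    exact hpath.trans (ReflTransGen.mono (fun _ _ => LowStep.mono (by linarith)) _ _ hrest)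

end Moves

theorem reduction_algorithm_periodic_general (K L M : ℕ)
    (hK : 2 ≤ K) (hL : 2 ≤ L)
    (m : ℕ) (hm1 : 1 ≤ m) (hmM : m ≤ M)
    (σ : SiteP K L → ℕ) (hσ : IsWRP K L M σ)
    (hstripe : ∀ v : SiteP K L, v.1 = 0 ∨ v.1 = 1 → σ v = 0 ∨ σ v = m) :
    (∃ ω : List (SiteP K L → ℕ),
      IsPathP K L M ω σ (fun _ => m) ∧ heightP K L ω ≤ HP K L σ + 1) ∧
    commP K L M σ (fun _ => m) - HP K L σ ≤ 1 := by
  have : NeZero K := ⟨by omega⟩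
  have : NeZero L := ⟨by omega⟩
  obtain ⟨ω, hω, hheight⟩ := exists_isPathP_of_reflTransGen hσ (by linarith)
    (reflTransGen_lowStep_const (by omega) hmM hσ hstripe)
  exact ⟨⟨ω, hω, hheight⟩, by linarith [commP_le_heightP hω]⟩

/-- Reduction algorithm, periodic boundary conditions: if `σ ∈ X` has only
empty sites or particles of type `m` in the first vertical stripe
`C_1 = c_0 ∪ c_1`, then there is a path `ω : σ → s^(m)` with
`Φ_ω ≤ H(σ) + 1`; in particular `Φ(σ, s^(m)) - H(σ) ≤ 1`. -/
theorem reduction_algorithm_periodic (K L M : ℕ)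
    (hK : 2 ≤ K) (hL : 2 ≤ L) (hM : 2 ≤ M)
    (m : ℕ) (hm1 : 1 ≤ m) (hmM : m ≤ M)
    (σ : SiteP K L → ℕ) (hσ : IsWRP K L M σ)
    (hstripe : ∀ v : SiteP K L, v.1 = 0 ∨ v.1 = 1 → σ v = 0 ∨ σ v = m) :
    (∃ ω : List (SiteP K L → ℕ),
      IsPathP K L M ω σ (fun _ => m) ∧ heightP K L ω ≤ HP K L σ + 1) ∧
    commP K L M σ (fun _ => m) - HP K L σ ≤ 1 :=
  reduction_algorithm_periodic_general K L M hK hL m hm1 hmM σ hσ hstripe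
end

section
/- (Projection onto two particle types.) Let G be a finite simple graph and M ≥ 2, and define the map ξ̂ on configurations by [ξ̂(σ)](v) = σ(v) if σ(v) ∈ {0,1,2} and [ξ̂(σ)](v) = 1 if σ(v) ∈ {3,…,M}. Then: (a) ξ̂ maps X into X; (b) H(ξ̂(σ)) = H(σ) for every σ ∈ X; (c) if σ, σ' ∈ X are related by a single-site update, then ξ̂(σ) and ξ̂(σ') are related by a single-site update. Consequently, any path ω : σ → σ' in X is mapped to a path ξ̂(ω) : ξ̂(σ) → ξ̂(σ') of the same length and with the same energy profile, so Φ_{ξ̂(ω)} = Φ_ω. -/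
/-- A Widom–Rowlinson configuration with `M` particle types on the graph `G`:
values in `{0,1,…,M}` and no two adjacent sites occupied by different nonzero types. -/
def IsWR {V : Type*} (G : SimpleGraph V) (M : ℕ) (σ : V → ℕ) : Prop :=
  (∀ v, σ v ≤ M) ∧ ∀ v w, G.Adj v w → σ v = 0 ∨ σ w = 0 ∨ σ v = σ w

/-- The energy `H(σ) = -#{v : σ v ≠ 0}`. -/
noncomputable def Hen {V : Type*} (σ : V → ℕ) : ℤ :=
  -(Nat.card {v : V // σ v ≠ 0} : ℤ)

/-- `σ` and `σ'` are related by a single-site update: they differ at exactly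
one site `v`, and moreover `σ v = 0` or `σ' v = 0`. -/
def Upd {V : Type*} (σ σ' : V → ℕ) : Prop :=
  ∃ v, (σ v = 0 ∨ σ' v = 0) ∧ σ v ≠ σ' v ∧ ∀ w, w ≠ v → σ w = σ' w

/-- A path `ω : σ → σ'`: a finite nonempty sequence of WR configurations from
`σ` to `σ'` whose consecutive configurations coincide or are related by a
single-site update. -/
def IsPath {V : Type*} (G : SimpleGraph V) (M : ℕ)
    (ω : List (V → ℕ)) (σ σ' : V → ℕ) : Prop :=
  ω ≠ [] ∧ ω.head? = some σ ∧ ω.getLast? = some σ' ∧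
    (∀ η ∈ ω, IsWR G M η) ∧
    ω.Chain' (fun η η' => η = η' ∨ Upd η η')

/-- The height `Φ_ω` of a path: the maximum energy along it. -/
noncomputable def pathHeight {V : Type*} (ω : List (V → ℕ)) : ℤ :=
  sSup {h : ℤ | ∃ η ∈ ω, Hen η = h}

/-- The communication height `Φ(σ,σ')`: the minimal height over all paths
`ω : σ → σ'`. -/
noncomputable def commH {V : Type*} (G : SimpleGraph V) (M : ℕ)
    (σ σ' : V → ℕ) : ℤ :=
  sInf {h : ℤ | ∃ ω, IsPath G M ω σ σ' ∧ pathHeight ω = h}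

/-- The projection `ξ̂` onto two particle types: particles of types `3,…,M`
are replaced by particles of type `1`. -/
def hatXi {V : Type*} (σ : V → ℕ) : V → ℕ :=
  fun v => if σ v ≤ 2 then σ v else 1

/-! `ξ̂` fixes the set of empty sites and only merges the types `3,…,M` into type `1`.
Hence it preserves the occupation pattern (so the energy and the single-site updates),
and merging types cannot create two adjacent particles of different types. -/

section

variable {V : Type*}

lemma hatXi_eq_zero_iff (σ : V → ℕ) (v : V) :
    hatXi σ v = 0 ↔ σ v = 0 := by
  unfold hatXi; split <;> omega

lemma hatXi_apply_le (σ : V → ℕ) (v : V) : hatXi σ v ≤ σ v := by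
  unfold hatXi; split <;> omega

lemma IsWR.hatXi {G : SimpleGraph V} {M : ℕ} {σ : V → ℕ}
    (h : IsWR G M σ) : IsWR G M (hatXi σ) := by
  refine ⟨fun v => (hatXi_apply_le σ v).trans (h.1 v), fun v w hvw => ?_⟩
  rcases h.2 v w hvw with h0 | h0 | h0
  · exact .inl ((hatXi_eq_zero_iff σ v).2 h0)
  · exact .inr (.inl ((hatXi_eq_zero_iff σ w).2 h0))
  · exact .inr (.inr (by simp only [_root_.hatXi, h0]))

lemma Hen_hatXi (σ : V → ℕ) : Hen (hatXi σ) = Hen σ := by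
  unfold Hen
  rw [Nat.card_congr (Equiv.subtypeEquivRight fun v => (hatXi_eq_zero_iff σ v).not)]

lemma Upd.hatXi {σ σ' : V → ℕ} (h : Upd σ σ') :
    Upd (hatXi σ) (hatXi σ') := by
  obtain ⟨v, h0, hne, hw⟩ := h
  refine ⟨v, ?_, ?_, fun w hwv => by simp only [_root_.hatXi, hw w hwv]⟩
  · simpa only [hatXi_eq_zero_iff] using h0
  · intro heq
    rcases h0 with h0 | h0
    · have h0' := (hatXi_eq_zero_iff σ' v).1 (heq ▸ (hatXi_eq_zero_iff σ v).2 h0)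
      omega
    · have h0' := (hatXi_eq_zero_iff σ v).1 (heq ▸ (hatXi_eq_zero_iff σ' v).2 h0)
      omega

lemma IsPath.map {G : SimpleGraph V} {M : ℕ} {ω : List (V → ℕ)}
    {σ σ' : V → ℕ} {f : (V → ℕ) → (V → ℕ)}
    (hf_wr : ∀ η, IsWR G M η → IsWR G M (f η))
    (hf_upd : ∀ η η', Upd η η' → Upd (f η) (f η')) (h : IsPath G M ω σ σ') :
    IsPath G M (ω.map f) (f σ) (f σ') := by
  obtain ⟨hne, hhead, hlast, hwr, hchain⟩ := h
  refine ⟨by simpa using hne, by simp [List.head?_map, hhead],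
    by simp [List.getLast?_map, hlast], ?_, ?_⟩
  · simp only [List.mem_map]
    rintro _ ⟨η, hη, rfl⟩
    exact hf_wr η (hwr η hη)
  · rw [List.Chain', List.isChain_map]
    exact hchain.imp fun η η' hηη' => hηη'.imp (congrArg f) (hf_upd η η')

lemma map_Hen_map_of_Hen_comp {f : (V → ℕ) → (V → ℕ)}
    (hf : ∀ η, Hen (f η) = Hen η) (ω : List (V → ℕ)) :
    (ω.map f).map Hen = ω.map Hen := by
  rw [List.map_map]
  exact List.map_congr_left fun η _ => hf η

lemma pathHeight_eq_sSup_mem_map (ω : List (V → ℕ)) :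
    pathHeight ω = sSup {h : ℤ | h ∈ ω.map Hen} := by
  simp only [pathHeight, List.mem_map]

lemma pathHeight_map_of_Hen_comp {f : (V → ℕ) → (V → ℕ)}
    (hf : ∀ η, Hen (f η) = Hen η) (ω : List (V → ℕ)) :
    pathHeight (ω.map f) = pathHeight ω := by
  rw [pathHeight_eq_sSup_mem_map, pathHeight_eq_sSup_mem_map, map_Hen_map_of_Hen_comp hf]

end

theorem projection_two_types_general {V : Type*} (G : SimpleGraph V)
    (M : ℕ) :
    (∀ σ : V → ℕ, IsWR G M σ → IsWR G M (hatXi σ)) ∧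
    (∀ σ : V → ℕ, IsWR G M σ → Hen (hatXi σ) = Hen σ) ∧
    (∀ σ σ' : V → ℕ, IsWR G M σ → IsWR G M σ' → Upd σ σ' →
      Upd (hatXi σ) (hatXi σ')) ∧
    (∀ (ω : List (V → ℕ)) (σ σ' : V → ℕ), IsPath G M ω σ σ' →
      IsPath G M (ω.map hatXi) (hatXi σ) (hatXi σ') ∧
      (ω.map hatXi).length = ω.length ∧
      (ω.map hatXi).map Hen = ω.map Hen ∧
      pathHeight (ω.map hatXi) = pathHeight ω) :=
  ⟨fun _ h => h.hatXi, fun σ _ => Hen_hatXi σ, fun _ _ _ _ h => h.hatXi,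
    fun ω _ _ h => ⟨h.map (fun _ => IsWR.hatXi) (fun _ _ => Upd.hatXi), List.length_map _,
      map_Hen_map_of_Hen_comp Hen_hatXi ω, pathHeight_map_of_Hen_comp Hen_hatXi ω⟩⟩

/-- Projection onto two particle types: `ξ̂` maps `X` into `X`, preserves the
energy, preserves single-site updates, and maps every path to a path with the
same length, the same energy profile and the same height. -/
theorem projection_two_types {V : Type*} [Fintype V] (G : SimpleGraph V)
    (M : ℕ) (hM : 2 ≤ M) :
    (∀ σ : V → ℕ, IsWR G M σ → IsWR G M (hatXi σ)) ∧
    (∀ σ : V → ℕ, IsWR G M σ → Hen (hatXi σ) = Hen σ) ∧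
    (∀ σ σ' : V → ℕ, IsWR G M σ → IsWR G M σ' → Upd σ σ' →
      Upd (hatXi σ) (hatXi σ')) ∧
    (∀ (ω : List (V → ℕ)) (σ σ' : V → ℕ), IsPath G M ω σ σ' →
      IsPath G M (ω.map hatXi) (hatXi σ) (hatXi σ') ∧
      (ω.map hatXi).length = ω.length ∧
      (ω.map hatXi).map Hen = ω.map Hen ∧
      pathHeight (ω.map hatXi) = pathHeight ω) :=
  projection_two_types_general G M
end
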